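/- arXiv:2012.00389 — 4 statements merged into one kernel-verified Lean document; each statement's English description precedes it below -/
import Mathlib

section
/- Let n ≥ 1, let p : ℝ^n → [1,∞) be measurable with 1 < p^- ≤ p^+ < ∞, and let u ∈ L^{p(·)}(ℝ^n) ∩ C^2(ℝ^n). If C(u) := sup_{0<ε<1} ∬_{ℝ^n×ℝ^n} ε |u(x)−u(y)|^{p(x)+ε} / |x−y|^{n+p(x)} dx dy < +∞, then ∫_{ℝ^n} |∇u(x)|^{p(x)} dx < ∞; that is, u ∈ W^{1,p(·)}(ℝ^n). -/
set_option maxHeartbeats 1000000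


open MeasureTheory Filter Set Metric
open scoped ENNReal NNReal Topology

noncomputable section

/-- `ℝ^n` as a Euclidean space. -/
abbrev Eu (n : ℕ) := EuclideanSpace ℝ (Fin n)

/-- `v` is the distributional (weak) gradient of `u` on `ℝ^n`, i.e. `u, v` are locally
integrable and the integration-by-parts identity holds against all smooth compactly
supported test functions. -/
def HasWeakGradient {n : ℕ} (u : Eu n → ℝ) (v : Eu n → Eu n) : Prop :=
  MeasureTheory.LocallyIntegrable u volume ∧ MeasureTheory.LocallyIntegrable v volume ∧
    ∀ φ : Eu n → ℝ, ContDiff ℝ (⊤ : ℕ∞) φ → HasCompactSupport φ →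
      ∀ i : Fin n,
        ∫ x, u x * fderiv ℝ φ x (EuclideanSpace.single i 1) = - ∫ x, φ x * v x i

/-- Membership in the Sobolev space `W^{1,q}(ℝ^n)`, with (weak) gradient `v`:
`u ∈ L^q` and `v ∈ L^q`. -/
def MemW1 {n : ℕ} (u : Eu n → ℝ) (v : Eu n → Eu n) (q : ℝ) : Prop :=
  MemLp u (ENNReal.ofReal q) volume ∧ MemLp v (ENNReal.ofReal q) volume

/-- The maximal function of `v` along the direction `ω`:
`M_ω(v)(x) = sup_{h>0} (1/h) ∫_0^h ‖v(x+sω)‖ ds`, valued in `ℝ≥0∞`. -/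
def Mdir {n : ℕ} (ω : Eu n) (v : Eu n → Eu n) (x : Eu n) : ℝ≥0∞ :=
  ⨆ (h : ℝ) (_ : 0 < h),
    (ENNReal.ofReal h)⁻¹ * ∫⁻ s in Set.Ioo (0 : ℝ) h, (‖v (x + s • ω)‖₊ : ℝ≥0∞) ∂volume

/-- The constant `K_{n,s} = (1/s) ∫_{S^{n-1}} |ω·e|^s dH^{n-1}(ω)`, relative to the
unit vector `e`. -/
def Kconst (n : ℕ) (e : Eu n) (s : ℝ) : ℝ :=
  (1/s) * ∫ w in sphere (0 : Eu n) 1, |(inner ℝ w e : ℝ)| ^ s ∂μH[(n:ℝ)-1]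

lemma geom_aux {ε : ℝ} (hε0 : 0 < ε) : 1 - (1/2:ℝ)^ε ≤ ε := by
  have h2 : (1/2:ℝ)^ε = Real.exp (-(ε * Real.log 2)) := by
    rw [Real.rpow_def_of_pos (by norm_num : (0:ℝ) < 1/2)]
    rw [one_div, Real.log_inv]; ring_nf
  have h := Real.add_one_le_exp (-(ε * Real.log 2))
  have hl2 : Real.log 2 < 1 := by have := Real.log_two_lt_d9; linarith
  have hl2' : 0 < Real.log 2 := Real.log_pos (by norm_num)
  rw [h2]; nlinarith

lemma vol_ball (n : ℕ) (hn : 1 ≤ n) (c : Eu n) (r : ℝ) (hr : 0 ≤ r) :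
    volume (ball c r) = ENNReal.ofReal (r ^ n) * volume (ball (0 : Eu n) 1) := by
  have : Nontrivial (Eu n) :=
    Module.nontrivial_of_finrank_pos (R := ℝ) (by simp [finrank_euclideanSpace_fin]; omega)
  rw [Measure.addHaar_ball _ _ hr]
  simp

lemma fderiv_eq_inner_gradient (n : ℕ) (u : Eu n → ℝ) (x v : Eu n) :
    fderiv ℝ u x v = (inner ℝ (gradient u x) v : ℝ) := by
  simp [gradient, InnerProductSpace.toDual_symm_apply]

lemma core (n : ℕ) (hn : 1 ≤ n) (u : Eu n → ℝ) (hu : ContDiff ℝ 2 u)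
    (x : Eu n) (P : ℝ) (hP : 1 ≤ P)
    (δ : ℝ) (hδ0 : 0 < δ) (hδ1 : δ ≤ 1)
    (hδp : ∀ z ∈ ball x δ, ‖fderiv ℝ u z - fderiv ℝ u x‖ ≤ ‖gradient u x‖ / 8)
    (ha : 0 < ‖gradient u x‖) (ε : ℝ) (hε0 : 0 < ε) (hε1 : ε < 1) :
    ENNReal.ofReal ((δ/2)^ε * (‖gradient u x‖/2)^(P+ε) * (8:ℝ)^(-(n:ℝ)))
        * volume (ball (0 : Eu n) 1)
      ≤ ∫⁻ y, ENNReal.ofReal (ε * |u x - u y| ^ (P + ε) / ‖x - y‖ ^ ((n:ℝ) + P)) ∂volume := by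
  set a := ‖gradient u x‖ with hadef
  set g := gradient u x with hgdef
  set e := a⁻¹ • g with hedef
  have he : ‖e‖ = 1 := by
    rw [hedef, norm_smul, Real.norm_eq_abs, abs_of_pos (inv_pos.mpr ha), ← hadef,
      inv_mul_cancel₀ ha.ne']
  have hge : (inner ℝ g e : ℝ) = a := by
    rw [hedef, real_inner_smul_right, real_inner_self_eq_norm_mul_norm, ← hadef]
    field_simp
  have hfd : ∀ v : Eu n, fderiv ℝ u x v = (inner ℝ g v : ℝ) := fun v =>
    fderiv_eq_inner_gradient n u x v
  -- mean value theorem estimate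
  have hMVT : ∀ y ∈ ball x δ, |u y - u x - (inner ℝ g (y - x) : ℝ)| ≤ a/8 * ‖y - x‖ := by
    intro y hy
    have hmvt := (convex_ball x δ).norm_image_sub_le_of_norm_fderiv_le'
      (f := u) (φ := fderiv ℝ u x) (C := a/8)
      (fun z _ => (hu.differentiable (by norm_num)).differentiableAt)
      hδp (mem_ball_self hδ0) hy
    rw [hfd (y - x)] at hmvt
    simpa [Real.norm_eq_abs] using hmvt
  -- dyadic scales
  set t : ℕ → ℝ := fun k => (δ/2) * (1/2)^k with htdef
  have ht0 : ∀ k, 0 < t k := fun k => by positivity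
  have htle : ∀ k, t k ≤ δ/2 := fun k => by
    have : ((1:ℝ)/2)^k ≤ 1 := pow_le_one₀ (by norm_num) (by norm_num)
    calc t k ≤ (δ/2) * 1 := by
          apply mul_le_mul_of_nonneg_left this (by positivity)
      _ = δ/2 := mul_one _
  have htstep : ∀ i j, i < j → t j ≤ t i / 2 := by
    intro i j hij
    have : ((1:ℝ)/2)^j ≤ (1/2)^(i+1) :=
      pow_le_pow_of_le_one (by norm_num) (by norm_num) hij
    calc t j ≤ (δ/2) * ((1/2)^(i+1)) := mul_le_mul_of_nonneg_left this (by positivity)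
      _ = t i / 2 := by rw [htdef]; ring
  -- the balls
  set B : ℕ → Set (Eu n) := fun k => ball (x + ((3/4) * t k) • e) (t k / 8) with hBdef
  have hBprop : ∀ k, ∀ y ∈ B k, (5/8) * t k < ‖y - x‖ ∧ ‖y - x‖ < (7/8) * t k ∧
      (1/2) * (a * t k) ≤ |u x - u y| := by
    intro k y hy
    have hz : ‖y - x - ((3/4) * t k) • e‖ < t k / 8 := by
      have h1 := mem_ball.mp hy
      rw [dist_eq_norm] at h1
      have : y - (x + ((3/4) * t k) • e) = y - x - ((3/4) * t k) • e := by abel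
      rwa [this] at h1
    set z := y - x - ((3/4) * t k) • e with hzdef
    have hyx : y - x = ((3/4) * t k) • e + z := by rw [hzdef]; abel
    have hce : ‖((3/4) * t k) • e‖ = (3/4) * t k := by
      rw [norm_smul, he, mul_one, Real.norm_eq_abs, abs_of_pos (by positivity)]
    have hub : ‖y - x‖ < (7/8) * t k := by
      calc ‖y - x‖ ≤ ‖((3/4) * t k) • e‖ + ‖z‖ := by rw [hyx]; exact norm_add_le _ _
        _ < (3/4) * t k + t k / 8 := by rw [hce]; linarith
        _ = (7/8) * t k := by ring
    have hlb : (5/8) * t k < ‖y - x‖ := by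
      have heq : ((3/4) * t k) • e = (y - x) - z := by rw [hyx]; abel
      have h1 : ‖((3/4) * t k) • e‖ ≤ ‖y - x‖ + ‖z‖ := by
        rw [heq]; exact norm_sub_le _ _
      rw [hce] at h1; linarith
    have hinner : (inner ℝ g (y - x) : ℝ) = (3/4) * t k * a + (inner ℝ g z : ℝ) := by
      rw [hyx, inner_add_right, real_inner_smul_right, hge]
    have hinz : |(inner ℝ g z : ℝ)| ≤ a * ‖z‖ := abs_real_inner_le_norm g z
    have hzb : a * ‖z‖ ≤ a * (t k / 8) :=
      mul_le_mul_of_nonneg_left hz.le ha.le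
    have h58 : (5/8) * (a * t k) ≤ (inner ℝ g (y - x) : ℝ) := by
      rw [hinner]
      have := abs_le.mp hinz
      nlinarith
    have hyball : y ∈ ball x δ := by
      rw [mem_ball, dist_eq_norm]
      have : (7/8) * t k < δ := by
        have := htle k; linarith
      linarith
    have hm := hMVT y hyball
    have hm2 := abs_le.mp hm
    have h12 : (1/2) * (a * t k) ≤ u y - u x := by nlinarith
    refine ⟨hlb, hub, ?_⟩
    rw [abs_sub_comm]
    calc (1/2) * (a * t k) ≤ u y - u x := h12
      _ ≤ |u y - u x| := le_abs_self _
  -- disjointness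
  have hdisjlt : ∀ i j, i < j → Disjoint (B i) (B j) := by
    intro i j hij
    rw [Set.disjoint_left]
    intro y hyi hyj
    obtain ⟨h5i, _, _⟩ := hBprop i y hyi
    obtain ⟨_, h7j, _⟩ := hBprop j y hyj
    have hstep := htstep i j hij
    have := ht0 i
    linarith
  have hdisj : Pairwise (Function.onFun Disjoint B) := by
    intro i j hij
    rcases lt_or_gt_of_ne hij with h | h
    · exact hdisjlt i j h
    · exact (hdisjlt j i h).symm
  have hmeasB : ∀ k, MeasurableSet (B k) := fun k => measurableSet_ball
  -- measurability of integrand in y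
  set I : Eu n → ℝ≥0∞ :=
    fun y => ENNReal.ofReal (ε * |u x - u y| ^ (P + ε) / ‖x - y‖ ^ ((n:ℝ) + P)) with hIdef
  have hIm : Measurable I := by
    apply ENNReal.measurable_ofReal.comp
    apply Measurable.div
    · exact measurable_const.mul
        (((continuous_const.sub hu.continuous).abs.measurable).pow measurable_const)
    · exact ((continuous_const.sub continuous_id).norm.measurable).pow measurable_const
  -- lower bound constant on each ball
  set cst : ℕ → ℝ≥0∞ :=
    fun k => ENNReal.ofReal (ε * ((1/2) * (a * t k)) ^ (P + ε) / (t k) ^ ((n:ℝ) + P)) with hcstdef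
  have hlow : ∀ k, ∀ y ∈ B k, cst k ≤ I y := by
    intro k y hy
    obtain ⟨h5, h7, hq⟩ := hBprop k y hy
    rw [hcstdef, hIdef]
    apply ENNReal.ofReal_le_ofReal
    have hr0 : 0 < ‖x - y‖ := by rw [norm_sub_rev]; nlinarith [ht0 k]
    have hrt : ‖x - y‖ ≤ t k := by rw [norm_sub_rev]; nlinarith [ht0 k]
    have hnum : ((1/2) * (a * t k)) ^ (P + ε) ≤ |u x - u y| ^ (P + ε) := by
      apply Real.rpow_le_rpow (by positivity) _ (by linarith)
      rw [abs_sub_comm] at hq ⊢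
      linarith [hq]
    have hden0 : (0:ℝ) < ‖x - y‖ ^ ((n:ℝ) + P) := Real.rpow_pos_of_pos hr0 _
    have hden : ‖x - y‖ ^ ((n:ℝ) + P) ≤ (t k) ^ ((n:ℝ) + P) :=
      Real.rpow_le_rpow (norm_nonneg _) hrt (by positivity)
    apply div_le_div₀ (by positivity)
      (mul_le_mul_of_nonneg_left hnum hε0.le) hden0 hden
  -- set integral over each ball
  have hsetint : ∀ k, cst k * volume (B k) ≤ ∫⁻ y in B k, I y ∂volume := by
    intro k
    calc cst k * volume (B k) = ∫⁻ _ in B k, cst k ∂volume := by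
          rw [setLIntegral_const]
      _ ≤ ∫⁻ y in B k, I y ∂volume := setLIntegral_mono hIm (hlow k)
  -- volume of each ball
  have hvol : ∀ k, volume (B k) = ENNReal.ofReal ((t k / 8) ^ n) * volume (ball (0 : Eu n) 1) :=
    fun k => vol_ball n hn _ _ (by positivity)
  -- the real coefficient
  set q : ℝ := (1/2:ℝ)^ε with hqdef
  set C' : ℝ := (δ/2)^ε * (a/2)^(P+ε) * (8:ℝ)^(-(n:ℝ)) with hC'def
  have hC'0 : 0 ≤ C' := by rw [hC'def]; positivity
  have hq0 : 0 ≤ q := Real.rpow_nonneg (by norm_num) _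
  have hq1 : q < 1 := Real.rpow_lt_one (by norm_num) (by norm_num) hε0
  have halg : ∀ k, ε * ((1/2) * (a * t k)) ^ (P + ε) / (t k) ^ ((n:ℝ) + P) * ((t k / 8) ^ n)
      = (ε * C') * q ^ k := by
    intro k
    have hT := ht0 k
    have e1 : ((1/2) * (a * t k)) ^ (P + ε) = (a/2)^(P+ε) * (t k)^(P+ε) := by
      rw [show (1/2) * (a * t k) = (a/2) * t k by ring,
        Real.mul_rpow (by positivity) hT.le]
    have e2 : ((t k / 8) ^ n : ℝ) = (t k)^((n:ℝ)) * (8:ℝ)^(-(n:ℝ)) := by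
      rw [div_pow, Real.rpow_natCast, Real.rpow_neg (by norm_num), Real.rpow_natCast]
      rw [div_eq_mul_inv]
    have e3 : (t k)^(P+ε) * (t k)^((n:ℝ)) / (t k)^((n:ℝ)+P) = (t k)^ε := by
      rw [← Real.rpow_add hT, ← Real.rpow_sub hT]
      congr 1; ring
    have e4 : (t k)^ε = (δ/2)^ε * q^k := by
      rw [htdef, Real.mul_rpow (by positivity) (by positivity), hqdef,
        ← Real.rpow_natCast ((1/2:ℝ)^ε) k, ← Real.rpow_natCast ((1/2):ℝ) k,
        ← Real.rpow_mul (by norm_num), ← Real.rpow_mul (by norm_num), mul_comm ε (k:ℝ)]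
    calc ε * ((1/2) * (a * t k)) ^ (P + ε) / (t k) ^ ((n:ℝ) + P) * ((t k / 8) ^ n)
        = ε * (a/2)^(P+ε) * (8:ℝ)^(-(n:ℝ)) *
            ((t k)^(P+ε) * (t k)^((n:ℝ)) / (t k)^((n:ℝ)+P)) := by
          rw [e1, e2]; ring
      _ = ε * (a/2)^(P+ε) * (8:ℝ)^(-(n:ℝ)) * ((δ/2)^ε * q^k) := by rw [e3, e4]
      _ = (ε * C') * q ^ k := by rw [hC'def]; ring
  -- sum it up
  have hsum : ENNReal.ofReal C' * volume (ball (0 : Eu n) 1) ≤ ∑' k, cst k * volume (B k) := by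
    have hsummable : Summable (fun k : ℕ => (ε * C') * q ^ k) :=
      (summable_geometric_of_lt_one hq0 hq1).mul_left _
    calc ENNReal.ofReal C' * volume (ball (0 : Eu n) 1)
        ≤ ENNReal.ofReal (∑' k : ℕ, (ε * C') * q ^ k) * volume (ball (0 : Eu n) 1) := by
          apply mul_le_mul_left
          apply ENNReal.ofReal_le_ofReal
          have hgs : C' ≤ ∑' k : ℕ, (ε * C') * q ^ k := by
            have h1q : 1 - q ≤ ε := by
              have := geom_aux hε0; rw [hqdef] at *; linarith [geom_aux hε0]
            rw [tsum_mul_left, tsum_geometric_of_lt_one hq0 hq1]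
            have h1 : 0 < 1 - q := by linarith
            rw [mul_comm ε C', mul_assoc, ← div_eq_mul_inv]
            exact le_mul_of_one_le_right hC'0 ((one_le_div h1).mpr h1q)
          exact hgs
      _ = (∑' k : ℕ, ENNReal.ofReal ((ε * C') * q ^ k)) * volume (ball (0 : Eu n) 1) := by
          rw [ENNReal.ofReal_tsum_of_nonneg (fun k => by positivity) hsummable]
      _ = ∑' k : ℕ, ENNReal.ofReal ((ε * C') * q ^ k) * volume (ball (0 : Eu n) 1) := by
          rw [ENNReal.tsum_mul_right]
      _ = ∑' k, cst k * volume (B k) := by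
          refine (tsum_congr fun k => ?_).symm
          rw [hvol k, ← mul_assoc]
          simp only [hcstdef]
          rw [← ENNReal.ofReal_mul (by positivity), halg k]
  -- final chain
  calc ENNReal.ofReal C' * volume (ball (0 : Eu n) 1)
      ≤ (∑' k, cst k * volume (B k)) := hsum
    _ ≤ ∑' k, ∫⁻ y in B k, I y ∂volume := ENNReal.tsum_le_tsum hsetint
    _ = ∫⁻ y in ⋃ k, B k, I y ∂volume := (lintegral_iUnion hmeasB hdisj I).symm
    _ ≤ ∫⁻ y, I y ∂volume := setLIntegral_le_lintegral _ _

lemma pointwise_liminf (n : ℕ) (hn : 1 ≤ n) (u : Eu n → ℝ) (hu : ContDiff ℝ 2 u)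
    (x : Eu n) (P : ℝ) (hP : 1 ≤ P) :
    ENNReal.ofReal ((‖gradient u x‖/2)^P * (8:ℝ)^(-(n:ℝ))) * volume (ball (0 : Eu n) 1)
      ≤ liminf (fun m : ℕ => ∫⁻ y,
          ENNReal.ofReal ((1/((m:ℝ)+2)) * |u x - u y| ^ (P + 1/((m:ℝ)+2))
            / ‖x - y‖ ^ ((n:ℝ) + P)) ∂volume) atTop := by
  set a := ‖gradient u x‖ with hadef
  rcases eq_or_lt_of_le (norm_nonneg (gradient u x)) with h0 | ha
  · have hz : ((a:ℝ)/2)^P = 0 := by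
      rw [hadef, ← h0]
      simp [Real.zero_rpow (by linarith : P ≠ 0)]
    rw [hz]
    simp
  -- choose δ
  have hcont : Continuous (fderiv ℝ u) := hu.continuous_fderiv (by norm_num)
  obtain ⟨δ0, hδ0pos, hδ0⟩ := Metric.continuousAt_iff.mp hcont.continuousAt (a/8) (by positivity)
  set δ := min δ0 1 with hδdef
  have hδ0' : 0 < δ := lt_min hδ0pos one_pos
  have hδ1 : δ ≤ 1 := min_le_right _ _
  have hδp : ∀ z ∈ ball x δ, ‖fderiv ℝ u z - fderiv ℝ u x‖ ≤ a / 8 := by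
    intro z hz
    have : dist z x < δ0 := lt_of_lt_of_le (mem_ball.mp hz) (min_le_left _ _)
    have := hδ0 this
    rw [dist_eq_norm] at this
    exact this.le
  set ε : ℕ → ℝ := fun m => 1/((m:ℝ)+2) with hεdef
  have hε0 : ∀ m, 0 < ε m := fun m => by positivity
  have hε1 : ∀ m, ε m < 1 := by
    intro m
    rw [hεdef]
    have : (1:ℝ) < (m:ℝ)+2 := by have := Nat.cast_nonneg (α := ℝ) m; linarith
    simpa using (div_lt_one (by linarith)).mpr this
  set L : ℕ → ℝ≥0∞ := fun m =>
    ENNReal.ofReal ((δ/2)^(ε m) * (a/2)^(P+ε m) * (8:ℝ)^(-(n:ℝ)))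
      * volume (ball (0 : Eu n) 1) with hLdef
  have hL : ∀ m, L m ≤ ∫⁻ y,
      ENNReal.ofReal ((ε m) * |u x - u y| ^ (P + ε m) / ‖x - y‖ ^ ((n:ℝ) + P)) ∂volume :=
    fun m => core n hn u hu x P hP δ hδ0' hδ1 hδp ha (ε m) (hε0 m) (hε1 m)
  -- tendsto
  have hεt : Tendsto ε atTop (𝓝 0) := by
    rw [hεdef]
    simp only [one_div]
    exact (tendsto_atTop_add_const_right atTop (2:ℝ) tendsto_natCast_atTop_atTop).inv_tendsto_atTop
  have hf : ContinuousAt (fun s : ℝ => (δ/2)^s * (a/2)^(P+s) * (8:ℝ)^(-(n:ℝ))) 0 := by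
    apply ContinuousAt.mul _ continuousAt_const
    apply ContinuousAt.mul
    · exact Real.continuousAt_const_rpow (by positivity : (δ/2) ≠ 0)
    · exact (Real.continuousAt_const_rpow (by positivity : (a/2) ≠ 0)).comp
        (continuousAt_const.add continuousAt_id)
  have hT : Tendsto L atTop
      (𝓝 (ENNReal.ofReal ((a/2)^P * (8:ℝ)^(-(n:ℝ))) * volume (ball (0 : Eu n) 1))) := by
    apply ENNReal.Tendsto.mul_const _ (Or.inr measure_ball_lt_top.ne)
    have := (ENNReal.continuous_ofReal.continuousAt.comp hf).tendsto.comp hεt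
    simp only [Function.comp_def] at this ⊢
    convert this using 2
    rw [Real.rpow_zero, add_zero, one_mul]
  calc ENNReal.ofReal ((a/2)^P * (8:ℝ)^(-(n:ℝ))) * volume (ball (0 : Eu n) 1)
      = liminf L atTop := hT.liminf_eq.symm
    _ ≤ _ := liminf_le_liminf (Filter.Eventually.of_forall hL)

/-- Second part of Lemma 4.1: if the Nguyen-type quantities are uniformly bounded for
`ε ∈ (0,1)`, then the variable-exponent modular of the gradient is finite, i.e.
`u ∈ W^{1,p(·)}(ℝ^n)`. -/
theorem stmt11 (n : ℕ) (hn : 1 ≤ n) (p : Eu n → ℝ) (hpmeas : Measurable p)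
    (hp1 : ∀ x, 1 ≤ p x) (pm pp : ℝ) (hpm : pm = essInf p volume)
    (hpp : pp = essSup p volume) (h1m : 1 < pm) (hmp : pm ≤ pp)
    (u : Eu n → ℝ) (hu : ContDiff ℝ 2 u)
    (huLp : (∫⁻ x, (‖u x‖₊ : ℝ≥0∞) ^ p x ∂volume) < ⊤)
    (hC : (⨆ ε ∈ Set.Ioo (0:ℝ) 1,
        ∫⁻ x, ∫⁻ y,
          ENNReal.ofReal (ε * |u x - u y| ^ (p x + ε) / ‖x - y‖ ^ ((n : ℝ) + p x))
            ∂volume ∂volume) < ⊤) :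
    (∫⁻ x, (‖gradient u x‖₊ : ℝ≥0∞) ^ p x ∂volume) < ⊤ := by
  have hnontriv : Nontrivial (Eu n) :=
    Module.nontrivial_of_finrank_pos (R := ℝ) (by simp [finrank_euclideanSpace_fin]; omega)
  -- a.e. upper bound on p
  have hub : ∀ᵐ x ∂(volume : Measure (Eu n)), p x ≤ pp := by
    by_cases hb : IsBoundedUnder (· ≤ ·) (ae (volume : Measure (Eu n))) p
    · rw [hpp]; exact ae_le_essSup hb
    · exfalso
      have hempty : essSup p (volume : Measure (Eu n)) = sInf ∅ := by
        rw [essSup, Filter.limsup_eq]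
        congr 1
        ext a
        simp only [Set.mem_setOf_eq, Set.mem_empty_iff_false, iff_false]
        intro h
        exact hb ⟨a, h⟩
      rw [Real.sInf_empty] at hempty
      rw [hempty] at hpp
      linarith
  set ε : ℕ → ℝ := fun m => 1/((m:ℝ)+2) with hεdef
  have hε0 : ∀ m, 0 < ε m := fun m => by positivity
  have hε1 : ∀ m, ε m < 1 := by
    intro m
    rw [hεdef]
    have : (1:ℝ) < (m:ℝ)+2 := by have := Nat.cast_nonneg (α := ℝ) m; linarith
    simpa using (div_lt_one (by linarith)).mpr this
  set F : ℕ → Eu n → ℝ≥0∞ := fun m x => ∫⁻ y,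
      ENNReal.ofReal (ε m * |u x - u y| ^ (p x + ε m) / ‖x - y‖ ^ ((n:ℝ) + p x)) ∂volume
    with hFdef
  have hFmeas : ∀ m, Measurable (F m) := by
    intro m
    apply Measurable.lintegral_prod_right
    apply ENNReal.measurable_ofReal.comp
    apply Measurable.div
    · exact measurable_const.mul
        ((((hu.continuous.comp continuous_fst).sub
            (hu.continuous.comp continuous_snd)).abs.measurable).pow
          ((hpmeas.comp measurable_fst).add measurable_const))
    · exact ((continuous_fst.sub continuous_snd).norm.measurable).pow
        (measurable_const.add (hpmeas.comp measurable_fst))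
  set Csup : ℝ≥0∞ := ⨆ ε ∈ Set.Ioo (0:ℝ) 1,
      ∫⁻ x, ∫⁻ y,
        ENNReal.ofReal (ε * |u x - u y| ^ (p x + ε) / ‖x - y‖ ^ ((n : ℝ) + p x))
          ∂volume ∂volume with hCdef
  have hFle : ∀ m, ∫⁻ x, F m x ∂volume ≤ Csup := by
    intro m
    rw [hCdef]
    simp only [hFdef]
    exact le_biSup
      (f := fun e => ∫⁻ x, ∫⁻ y,
        ENNReal.ofReal (e * |u x - u y| ^ (p x + e) / ‖x - y‖ ^ ((n : ℝ) + p x))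
          ∂volume ∂volume)
      (⟨hε0 m, hε1 m⟩ : ε m ∈ Set.Ioo (0:ℝ) 1)
  -- Fatou
  have hfatou : ∫⁻ x, liminf (fun m => F m x) atTop ∂volume < ⊤ := by
    calc ∫⁻ x, liminf (fun m => F m x) atTop ∂volume
        ≤ liminf (fun m => ∫⁻ x, F m x ∂volume) atTop := lintegral_liminf_le hFmeas
      _ ≤ Csup := by
          apply Filter.liminf_le_of_le
          · exact ⟨0, Filter.Eventually.of_forall fun m => zero_le⟩
          · intro b hb
            obtain ⟨m, hm⟩ := (hb.and (Filter.Eventually.of_forall hFle)).exists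
            exact hm.1.trans hm.2
      _ < ⊤ := hC
  -- pointwise lower bound
  have hpt : ∀ x, ENNReal.ofReal ((‖gradient u x‖/2)^(p x) * (8:ℝ)^(-(n:ℝ)))
      * volume (ball (0 : Eu n) 1) ≤ liminf (fun m => F m x) atTop := by
    intro x
    exact pointwise_liminf n hn u hu x (p x) (hp1 x)
  -- integral of lower bound finite
  set D := ∫⁻ x, ENNReal.ofReal ((‖gradient u x‖/2)^(p x)) ∂volume with hDdef
  have hgradcont : Continuous (gradient u) := by
    have : Continuous (fderiv ℝ u) := hu.continuous_fderiv (by norm_num)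
    exact (InnerProductSpace.toDual ℝ (Eu n)).symm.continuous.comp this
  have hDmeas : Measurable fun x => ENNReal.ofReal ((‖gradient u x‖/2)^(p x)) := by
    apply ENNReal.measurable_ofReal.comp
    exact (hgradcont.norm.measurable.div_const 2).pow hpmeas
  set c : ℝ≥0∞ := ENNReal.ofReal ((8:ℝ)^(-(n:ℝ))) * volume (ball (0 : Eu n) 1) with hcdef
  have hc0 : c ≠ 0 := by
    rw [hcdef]
    apply mul_ne_zero
    · simpa using ENNReal.ofReal_pos.mpr (by positivity : (0:ℝ) < (8:ℝ)^(-(n:ℝ))) |>.ne'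
    · exact (measure_ball_pos volume 0 one_pos).ne'
  have hDfin : D * c < ⊤ := by
    calc D * c = ∫⁻ x, ENNReal.ofReal ((‖gradient u x‖/2)^(p x)) * c ∂volume := by
          rw [hDdef, lintegral_mul_const _ hDmeas]
      _ = ∫⁻ x, ENNReal.ofReal ((‖gradient u x‖/2)^(p x) * (8:ℝ)^(-(n:ℝ)))
            * volume (ball (0 : Eu n) 1) ∂volume := by
          congr 1
          ext x
          rw [hcdef, ENNReal.ofReal_mul (by positivity), mul_assoc]
      _ ≤ ∫⁻ x, liminf (fun m => F m x) atTop ∂volume := lintegral_mono hpt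
      _ < ⊤ := hfatou
  have hD : D < ⊤ := ENNReal.lt_top_of_mul_ne_top_left hDfin.ne hc0
  -- final comparison
  have hae : ∀ᵐ x ∂(volume : Measure (Eu n)),
      (‖gradient u x‖₊ : ℝ≥0∞) ^ p x
        ≤ ENNReal.ofReal ((2:ℝ)^pp) * ENNReal.ofReal ((‖gradient u x‖/2)^(p x)) := by
    filter_upwards [hub] with x hx
    have h1 : (‖gradient u x‖₊ : ℝ≥0∞) ^ p x = ENNReal.ofReal (‖gradient u x‖ ^ p x) := by
      rw [← enorm_eq_nnnorm, ← ofReal_norm,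
        ENNReal.ofReal_rpow_of_nonneg (norm_nonneg _) (by linarith [hp1 x])]
    rw [h1, ← ENNReal.ofReal_mul (by positivity)]
    apply ENNReal.ofReal_le_ofReal
    have h2 : ‖gradient u x‖ ^ p x = (2:ℝ)^(p x) * (‖gradient u x‖/2)^(p x) := by
      rw [← Real.mul_rpow (by norm_num) (by positivity)]
      congr 1
      ring
    rw [h2]
    apply mul_le_mul_of_nonneg_right _ (by positivity)
    exact Real.rpow_le_rpow_of_exponent_le (by norm_num) hx
  calc ∫⁻ x, (‖gradient u x‖₊ : ℝ≥0∞) ^ p x ∂volume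
      ≤ ∫⁻ x, ENNReal.ofReal ((2:ℝ)^pp)
          * ENNReal.ofReal ((‖gradient u x‖/2)^(p x)) ∂volume := lintegral_mono_ae hae
    _ = ENNReal.ofReal ((2:ℝ)^pp) * D := by
        rw [hDdef, lintegral_const_mul' _ _ ENNReal.ofReal_ne_top]
    _ < ⊤ := ENNReal.mul_lt_top ENNReal.ofReal_lt_top hD
end
end

section
/- Let n ≥ 1, let p : ℝ^n → [1,∞) be measurable with 1 < p^- ≤ p^+ < ∞, and let u ∈ L^{p(·)}(ℝ^n) ∩ C^2_b(ℝ^n) be a bounded C^2 function. If sup_{0<ε<1} ∬_{{(x,y) : |u(x)−u(y)| ≤ 1}} ε |u(x)−u(y)|^{p(x)+ε} / |x−y|^{n+p(x)} dx dy + ∬_{{(x,y) : |u(x)−u(y)| > 1}} 1 / |x−y|^{n+p(x)} dx dy < +∞, then ∫_{ℝ^n} |∇u(x)|^{p(x)} dx < ∞; that is, u ∈ W^{1,p(·)}(ℝ^n). -/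
open MeasureTheory Filter Set Metric
open scoped ENNReal NNReal Topology
open scoped RealInnerProductSpace

noncomputable section

set_option maxHeartbeats 1000000 in
lemma ofReal_mul_shift (a b : ℝ) (ha : 0 ≤ a) (c : ℝ≥0∞) :
    ENNReal.ofReal (a * b) * c = ENNReal.ofReal a * (ENNReal.ofReal b * c) := by
  rw [ENNReal.ofReal_mul ha, mul_assoc]

set_option maxHeartbeats 1000000 in
lemma key_lemma {n : ℕ} (hn : 1 ≤ n) (u : Eu n → ℝ) (x : Eu n) (px : ℝ) (hpx : 1 ≤ px)
    {ε : ℝ} (hε : ε ∈ Set.Ioo (0:ℝ) 1) {δ : ℝ} (hδ0 : 0 < δ) (hδ1 : δ ≤ 1)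
    (hder : ∀ y, dist y x < δ →
      |u y - u x - ⟪gradient u x, y - x⟫| ≤ ‖gradient u x‖ / 4 * ‖y - x‖)
    (hcont : ∀ y, dist y x < δ → |u x - u y| ≤ 1) :
    ENNReal.ofReal ((‖gradient u x‖ / 4) ^ (px + ε) * δ ^ ε / (4 * 8 ^ n))
        * volume (ball (0 : Eu n) 1)
      ≤ ∫⁻ y in {y | |u x - u y| ≤ 1},
          ENNReal.ofReal (ε * |u x - u y| ^ (px + ε) / ‖x - y‖ ^ ((n : ℝ) + px)) ∂volume := by
  haveI : Nonempty (Fin n) := ⟨⟨0, hn⟩⟩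
  set G := gradient u x with hG
  set g := ‖G‖ with hg
  have hg0 : 0 ≤ g := norm_nonneg _
  have hpe : 0 < px + ε := by linarith [hε.1]
  rcases eq_or_lt_of_le hg0 with hgz | hgpos
  · -- gradient is zero : LHS = 0
    have : (g / 4 : ℝ) ^ (px + ε) = 0 := by
      rw [← hgz, zero_div, Real.zero_rpow hpe.ne']
    rw [this]
    simp
  -- main case
  set e : Eu n := g⁻¹ • G with he
  have hne : ‖e‖ = 1 := by
    rw [he, norm_smul, norm_inv, Real.norm_eq_abs, abs_of_pos hgpos, ← hg,
      inv_mul_cancel₀ hgpos.ne']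
  have hGe : ⟪G, e⟫ = g := by
    rw [he, real_inner_smul_right, real_inner_self_eq_norm_sq, ← hg]
    field_simp
  set K : ℕ := ⌈1 / ε⌉₊ with hK
  set r : ℕ → ℝ := fun k => δ * (2:ℝ)⁻¹ ^ k with hr
  have hrpos : ∀ k, 0 < r k := fun k => by positivity
  have hrδ : ∀ k, r k ≤ δ := fun k => by
    have : (2:ℝ)⁻¹ ^ k ≤ 1 := pow_le_one₀ (by norm_num) (by norm_num)
    calc r k = δ * (2:ℝ)⁻¹ ^ k := rfl
    _ ≤ δ * 1 := mul_le_mul_of_nonneg_left this hδ0.le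
    _ = δ := mul_one δ
  set Bk : ℕ → Set (Eu n) := fun k => ball (x + ((3/4) * r k) • e) (r k / 8) with hBk
  -- facts about points in Bk
  have hmem : ∀ k, ∀ y ∈ Bk k,
      5/8 * r k ≤ ‖y - x‖ ∧ ‖y - x‖ ≤ 7/8 * r k ∧ g / 4 * ‖x - y‖ ≤ |u x - u y| := by
    intro k y hy
    have hyd : ‖y - x - ((3/4) * r k) • e‖ < r k / 8 := by
      have := mem_ball.mp hy
      rw [dist_eq_norm] at this
      have h2 : y - (x + ((3/4) * r k) • e) = y - x - ((3/4) * r k) • e := by abel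
      rwa [h2] at this
    have hce : ‖((3/4) * r k) • e‖ = 3/4 * r k := by
      rw [norm_smul, hne, Real.norm_eq_abs, abs_of_pos (by positivity), mul_one]
    have hup : ‖y - x‖ ≤ 7/8 * r k := by
      have h2 := norm_add_le (((3/4) * r k) • e) (y - x - ((3/4) * r k) • e)
      have h3 : ((3/4) * r k) • e + (y - x - ((3/4) * r k) • e) = y - x := by abel
      rw [h3, hce] at h2; linarith
    have hlo : 5/8 * r k ≤ ‖y - x‖ := by
      have h3 := norm_sub_norm_le (((3/4) * r k) • e) (y - x)
      have h4 : ‖((3/4) * r k) • e - (y - x)‖ = ‖y - x - ((3/4) * r k) • e‖ := norm_sub_rev _ _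
      rw [h4, hce] at h3; linarith
    refine ⟨hlo, hup, ?_⟩
    have hdx : dist y x < δ := by
      rw [dist_eq_norm]
      calc ‖y - x‖ ≤ 7/8 * r k := hup
      _ < r k := by linarith [hrpos k]
      _ ≤ δ := hrδ k
    -- inner product lower bound
    have hinner : 5/8 * r k * g ≤ ⟪G, y - x⟫ := by
      have hsplit : ⟪G, y - x⟫ = ⟪G, ((3/4) * r k) • e⟫ + ⟪G, y - x - ((3/4) * r k) • e⟫ := by
        rw [← inner_add_right]
        congr 1
        abel
      have h5 : ⟪G, ((3/4) * r k) • e⟫ = 3/4 * r k * g := by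
        rw [real_inner_smul_right, hGe]
      have h6 : |⟪G, y - x - ((3/4) * r k) • e⟫| ≤ g * (r k / 8) := by
        calc |⟪G, y - x - ((3/4) * r k) • e⟫| ≤ ‖G‖ * ‖y - x - ((3/4) * r k) • e‖ :=
          abs_real_inner_le_norm _ _
        _ ≤ g * (r k / 8) := by
          rw [← hg]
          exact mul_le_mul_of_nonneg_left hyd.le hg0
      rw [hsplit, h5]
      have h6' := (abs_le.mp h6).1
      have e3 : g * (r k / 8) = 1/8 * (r k * g) := by ring
      have e4 : 3/4 * r k * g = 6/8 * (r k * g) := by ring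
      have e5 : 5/8 * r k * g = 5/8 * (r k * g) := by ring
      linarith
    have herr := hder y hdx
    have habs : |u x - u y| = |u y - u x| := abs_sub_comm _ _
    have hxy : ‖x - y‖ = ‖y - x‖ := norm_sub_rev _ _
    rw [habs, hxy]
    have hg4 : (0:ℝ) ≤ g / 4 := by linarith
    have hup4 : g / 4 * ‖y - x‖ ≤ g / 4 * (7/8 * r k) := mul_le_mul_of_nonneg_left hup hg4
    have hrg : (0:ℝ) ≤ r k * g := le_of_lt (mul_pos (hrpos k) hgpos)
    have e1 : g / 4 * (7/8 * r k) = 7/32 * (r k * g) := by ring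
    have e2 : 5/8 * r k * g = 20/32 * (r k * g) := by ring
    have h7 := abs_le.mp herr
    have h8 : ⟪G, y - x⟫ - g / 4 * ‖y - x‖ ≤ u y - u x := by linarith [h7.1]
    calc g / 4 * ‖y - x‖ ≤ g / 4 * (7/8 * r k) := hup4
    _ ≤ u y - u x := by linarith
    _ ≤ |u y - u x| := le_abs_self _
  -- pointwise lower bound for the integrand on `Bk k`
  have hεn : ε - (n:ℝ) ≤ 0 := by
    have : (1:ℝ) ≤ (n:ℝ) := by exact_mod_cast hn
    linarith [hε.2]
  have hpoint : ∀ k, ∀ y ∈ Bk k,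
      ENNReal.ofReal (ε * ((g / 4) ^ (px + ε) * r k ^ (ε - (n:ℝ)))) ≤
        ENNReal.ofReal (ε * |u x - u y| ^ (px + ε) / ‖x - y‖ ^ ((n : ℝ) + px)) := by
    intro k y hy
    obtain ⟨hlo, hup, hkey⟩ := hmem k y hy
    have hxy : ‖x - y‖ = ‖y - x‖ := norm_sub_rev _ _
    have hs0 : 0 < ‖x - y‖ := by rw [hxy]; nlinarith [hrpos k]
    have hsrk : ‖x - y‖ ≤ r k := by rw [hxy]; nlinarith [hrpos k]
    apply ENNReal.ofReal_le_ofReal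
    have h1 : r k ^ (ε - (n:ℝ)) ≤ ‖x - y‖ ^ (ε - (n:ℝ)) :=
      Real.rpow_le_rpow_of_nonpos hs0 hsrk hεn
    have h2 : ‖x - y‖ ^ (ε - (n:ℝ)) = ‖x - y‖ ^ (px + ε) / ‖x - y‖ ^ ((n:ℝ) + px) := by
      rw [← Real.rpow_sub hs0]
      congr 1
      ring
    have h3 : (g/4) ^ (px + ε) * ‖x - y‖ ^ (px + ε) = (g/4 * ‖x - y‖) ^ (px + ε) :=
      (Real.mul_rpow (by positivity) hs0.le).symm
    have h4 : (g/4 * ‖x - y‖) ^ (px + ε) ≤ |u x - u y| ^ (px + ε) :=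
      Real.rpow_le_rpow (by positivity) hkey hpe.le
    calc ε * ((g / 4) ^ (px + ε) * r k ^ (ε - (n:ℝ)))
        ≤ ε * ((g / 4) ^ (px + ε) * ‖x - y‖ ^ (ε - (n:ℝ))) := by
          have := mul_le_mul_of_nonneg_left h1 (by positivity : (0:ℝ) ≤ (g/4) ^ (px + ε))
          exact mul_le_mul_of_nonneg_left this hε.1.le
    _ = ε * ((g/4 * ‖x - y‖) ^ (px + ε)) / ‖x - y‖ ^ ((n:ℝ) + px) := by
          rw [h2, ← h3]; ring
    _ ≤ ε * |u x - u y| ^ (px + ε) / ‖x - y‖ ^ ((n:ℝ) + px) := by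
          apply div_le_div_of_nonneg_right ?_ (Real.rpow_pos_of_pos hs0 _).le
          exact mul_le_mul_of_nonneg_left h4 hε.1.le
  -- volume of the balls
  have hvol : ∀ k, volume (Bk k) =
      ENNReal.ofReal ((r k / 8) ^ n) * volume (ball (0 : Eu n) 1) := by
    intro k
    rw [hBk]
    rw [Measure.addHaar_ball volume _ (by positivity : (0:ℝ) ≤ r k / 8),
      finrank_euclideanSpace_fin]
  -- numeric facts about K
  have hKε1 : (1:ℝ) ≤ (K : ℝ) * ε := by
    have h := mul_le_mul_of_nonneg_right (Nat.le_ceil (1 / ε)) hε.1.le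
    have h2 : 1 / ε * ε = 1 := by rw [one_div, inv_mul_cancel₀ hε.1.ne']
    rw [h2] at h
    exact h
  have hKε2 : (K : ℝ) * ε ≤ 2 := by
    have h := mul_le_mul_of_nonneg_right (Nat.ceil_lt_add_one
      (div_nonneg zero_le_one hε.1.le)).le hε.1.le
    have h2 : (1 / ε + 1) * ε = 1 + ε := by rw [add_mul, one_mul, one_div, inv_mul_cancel₀ hε.1.ne']
    rw [h2] at h
    linarith [hε.2]
  -- per-term bound
  have harith : ∀ k < K, ε * ((g/4) ^ (px + ε) * δ ^ ε / (4 * 8 ^ n)) ≤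
      ε * ((g/4) ^ (px + ε) * r k ^ (ε - (n:ℝ))) * (r k / 8) ^ n := by
    intro k hk
    have hq : r k ^ (ε - (n:ℝ)) * r k ^ (n:ℕ) = r k ^ ε := by
      rw [← Real.rpow_natCast (r k) n, ← Real.rpow_add (hrpos k)]
      congr 1
      ring
    have hkε2 : (k:ℝ) * ε ≤ 2 := by
      have : (k:ℝ) ≤ (K:ℝ) := by exact_mod_cast hk.le
      nlinarith [hε.1]
    have h14 : (1/4:ℝ) ≤ ((2:ℝ)⁻¹ ^ k) ^ ε := by
      calc (1/4:ℝ) = (2:ℝ)⁻¹ ^ (2:ℝ) := by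
            rw [show (2:ℝ) = ((2:ℕ):ℝ) from by norm_num, Real.rpow_natCast]; norm_num
      _ ≤ (2:ℝ)⁻¹ ^ ((k:ℝ) * ε) :=
            Real.rpow_le_rpow_of_exponent_ge (by norm_num) (by norm_num) hkε2
      _ = ((2:ℝ)⁻¹ ^ ((k:ℕ):ℝ)) ^ ε := Real.rpow_mul (by norm_num) _ _
      _ = ((2:ℝ)⁻¹ ^ k) ^ ε := by rw [Real.rpow_natCast]
    have hrε : δ ^ ε * (1/4 : ℝ) ≤ r k ^ ε := by
      have hsplit : r k ^ ε = δ ^ ε * ((2:ℝ)⁻¹ ^ k) ^ ε := Real.mul_rpow hδ0.le (by positivity)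
      rw [hsplit]
      exact mul_le_mul_of_nonneg_left h14 (by positivity)
    have hfac : (0:ℝ) ≤ ε * (g/4) ^ (px + ε) / 8 ^ n :=
      div_nonneg (mul_nonneg hε.1.le (Real.rpow_nonneg (by positivity) _)) (by positivity)
    calc ε * ((g/4) ^ (px + ε) * δ ^ ε / (4 * 8 ^ n))
        = ε * (g/4) ^ (px + ε) / 8 ^ n * (δ ^ ε * (1/4)) := by ring
    _ ≤ ε * (g/4) ^ (px + ε) / 8 ^ n * (r k ^ ε) := mul_le_mul_of_nonneg_left hrε hfac
    _ = ε * ((g/4) ^ (px + ε) * r k ^ (ε - (n:ℝ))) * (r k / 8) ^ n := by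
        rw [← hq, div_pow]; ring
  have hterm : ∀ k < K,
      ENNReal.ofReal (ε * ((g/4) ^ (px + ε) * δ ^ ε / (4 * 8 ^ n)))
          * volume (ball (0 : Eu n) 1) ≤
        ∫⁻ y in Bk k,
          ENNReal.ofReal (ε * |u x - u y| ^ (px + ε) / ‖x - y‖ ^ ((n : ℝ) + px)) ∂volume := by
    intro k hk
    calc ENNReal.ofReal (ε * ((g/4) ^ (px + ε) * δ ^ ε / (4 * 8 ^ n)))
            * volume (ball (0 : Eu n) 1)
        ≤ ENNReal.ofReal (ε * ((g/4) ^ (px + ε) * r k ^ (ε - (n:ℝ))) * (r k / 8) ^ n)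
            * volume (ball (0 : Eu n) 1) :=
          mul_le_mul_left (ENNReal.ofReal_le_ofReal (harith k hk)) _
    _ = ENNReal.ofReal (ε * ((g/4) ^ (px + ε) * r k ^ (ε - (n:ℝ)))) * volume (Bk k) := by
          rw [hvol k, ofReal_mul_shift _ _ (mul_nonneg hε.1.le
            (mul_nonneg (Real.rpow_nonneg (by positivity) _) (Real.rpow_nonneg (hrpos k).le _)))]
    _ = ∫⁻ _ in Bk k, ENNReal.ofReal (ε * ((g/4) ^ (px + ε) * r k ^ (ε - (n:ℝ)))) ∂volume :=
          (setLIntegral_const _ _).symm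
    _ ≤ ∫⁻ y in Bk k,
          ENNReal.ofReal (ε * |u x - u y| ^ (px + ε) / ‖x - y‖ ^ ((n : ℝ) + px)) ∂volume :=
          setLIntegral_mono' measurableSet_ball (hpoint k)
  -- disjointness
  have key2 : ∀ a b : ℕ, a < b → Disjoint (Bk a) (Bk b) := by
    intro a b hab
    rw [Set.disjoint_left]
    intro y hya hyb
    obtain ⟨hlo_a, hup_a, -⟩ := hmem a y hya
    obtain ⟨-, hup_b, -⟩ := hmem b y hyb
    have hb : r b ≤ 2⁻¹ * r a := by
      have hpow : (2:ℝ)⁻¹ ^ b ≤ (2:ℝ)⁻¹ ^ (a + 1) :=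
        pow_le_pow_of_le_one (by norm_num) (by norm_num) (Nat.succ_le_of_lt hab)
      calc r b = δ * (2:ℝ)⁻¹ ^ b := rfl
      _ ≤ δ * (2:ℝ)⁻¹ ^ (a + 1) := mul_le_mul_of_nonneg_left hpow hδ0.le
      _ = 2⁻¹ * (δ * (2:ℝ)⁻¹ ^ a) := by ring
    have := hrpos a
    nlinarith
  have hdisj : Set.PairwiseDisjoint ↑(Finset.range K) Bk := by
    intro i _ j _ hij
    rcases lt_or_gt_of_ne hij with h | h
    · exact key2 i j h
    · exact (key2 j i h).symm
  have hsubset : ∀ k, Bk k ⊆ {y | |u x - u y| ≤ 1} := by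
    intro k y hy
    obtain ⟨hlo, hup, -⟩ := hmem k y hy
    refine hcont y ?_
    rw [dist_eq_norm]
    calc ‖y - x‖ ≤ 7/8 * r k := hup
    _ < r k := by linarith [hrpos k]
    _ ≤ δ := hrδ k
  -- put everything together
  have hsum : ENNReal.ofReal ((g / 4) ^ (px + ε) * δ ^ ε / (4 * 8 ^ n))
        * volume (ball (0 : Eu n) 1)
      ≤ ENNReal.ofReal ((K:ℝ) * (ε * ((g/4) ^ (px + ε) * δ ^ ε / (4 * 8 ^ n))))
        * volume (ball (0 : Eu n) 1) := by
    apply mul_le_mul_left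
    apply ENNReal.ofReal_le_ofReal
    have h0 : (0:ℝ) ≤ (g/4) ^ (px + ε) * δ ^ ε / (4 * 8 ^ n) := by positivity
    calc (g/4) ^ (px + ε) * δ ^ ε / (4 * 8 ^ n)
        = 1 * ((g/4) ^ (px + ε) * δ ^ ε / (4 * 8 ^ n)) := (one_mul _).symm
    _ ≤ ((K:ℝ) * ε) * ((g/4) ^ (px + ε) * δ ^ ε / (4 * 8 ^ n)) :=
        mul_le_mul_of_nonneg_right hKε1 h0
    _ = (K:ℝ) * (ε * ((g/4) ^ (px + ε) * δ ^ ε / (4 * 8 ^ n))) := by ring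
  have hsum2 : ENNReal.ofReal ((K:ℝ) * (ε * ((g/4) ^ (px + ε) * δ ^ ε / (4 * 8 ^ n))))
        * volume (ball (0 : Eu n) 1)
      = ∑ k ∈ Finset.range K,
          ENNReal.ofReal (ε * ((g/4) ^ (px + ε) * δ ^ ε / (4 * 8 ^ n)))
            * volume (ball (0 : Eu n) 1) := by
    rw [Finset.sum_const, Finset.card_range, nsmul_eq_mul,
      ofReal_mul_shift _ _ (Nat.cast_nonneg K), ENNReal.ofReal_natCast]
  calc ENNReal.ofReal ((g / 4) ^ (px + ε) * δ ^ ε / (4 * 8 ^ n))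
        * volume (ball (0 : Eu n) 1)
      ≤ ∑ k ∈ Finset.range K,
          ENNReal.ofReal (ε * ((g/4) ^ (px + ε) * δ ^ ε / (4 * 8 ^ n)))
            * volume (ball (0 : Eu n) 1) := hsum.trans_eq hsum2
  _ ≤ ∑ k ∈ Finset.range K, ∫⁻ y in Bk k,
        ENNReal.ofReal (ε * |u x - u y| ^ (px + ε) / ‖x - y‖ ^ ((n : ℝ) + px)) ∂volume :=
      Finset.sum_le_sum fun k hk => hterm k (Finset.mem_range.mp hk)
  _ = ∫⁻ y in ⋃ k ∈ Finset.range K, Bk k,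
        ENNReal.ofReal (ε * |u x - u y| ^ (px + ε) / ‖x - y‖ ^ ((n : ℝ) + px)) ∂volume :=
      (lintegral_biUnion_finset hdisj (fun k _ => measurableSet_ball) _).symm
  _ ≤ ∫⁻ y in {y | |u x - u y| ≤ 1},
        ENNReal.ofReal (ε * |u x - u y| ^ (px + ε) / ‖x - y‖ ^ ((n : ℝ) + px)) ∂volume := by
      apply lintegral_mono_set
      intro y hy
      simp only [mem_iUnion] at hy
      obtain ⟨k, -, hk⟩ := hy
      exact hsubset k hk

lemma meas_I {n : ℕ} (p : Eu n → ℝ) (hpmeas : Measurable p) (u : Eu n → ℝ)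
    (hum : Measurable u) (ε : ℝ) :
    Measurable fun x : Eu n => ∫⁻ y in {y | |u x - u y| ≤ 1},
      ENNReal.ofReal (ε * |u x - u y| ^ (p x + ε) / ‖x - y‖ ^ ((n : ℝ) + p x)) ∂volume := by
  have hm1 : Measurable fun q : Eu n × Eu n => |u q.1 - u q.2| :=
    ((hum.comp measurable_fst).sub (hum.comp measurable_snd)).abs
  have hF : Measurable (Set.indicator {q : Eu n × Eu n | |u q.1 - u q.2| ≤ 1}
        (fun q => ENNReal.ofReal
          (ε * |u q.1 - u q.2| ^ (p q.1 + ε) / ‖q.1 - q.2‖ ^ ((n : ℝ) + p q.1)))) := by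
    apply Measurable.indicator
    · apply Measurable.ennreal_ofReal
      apply Measurable.div
      · exact (measurable_const.mul
          (hm1.pow ((hpmeas.comp measurable_fst).add_const ε)))
      · exact (measurable_fst.sub measurable_snd).norm.pow
          (measurable_const.add (hpmeas.comp measurable_fst))
    · exact measurableSet_le hm1 measurable_const
  have heq : (fun x : Eu n => ∫⁻ y in {y | |u x - u y| ≤ 1},
      ENNReal.ofReal (ε * |u x - u y| ^ (p x + ε) / ‖x - y‖ ^ ((n : ℝ) + p x)) ∂volume)
      = fun x : Eu n => ∫⁻ y, Set.indicator {q : Eu n × Eu n | |u q.1 - u q.2| ≤ 1}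
          (fun q => ENNReal.ofReal
            (ε * |u q.1 - u q.2| ^ (p q.1 + ε) / ‖q.1 - q.2‖ ^ ((n : ℝ) + p q.1))) (x, y)
            ∂volume := by
    funext x
    rw [← lintegral_indicator (measurableSet_le ((measurable_const.sub hum).abs)
      measurable_const : MeasurableSet {y | |u x - u y| ≤ 1})]
    congr 1
  rw [heq]
  exact hF.lintegral_prod_right'

lemma liminf_bound {n : ℕ} (hn : 1 ≤ n) (u : Eu n → ℝ) (hu : ContDiff ℝ 2 u)
    (p : Eu n → ℝ) (hp1 : ∀ x, 1 ≤ p x) (x : Eu n) :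
    ENNReal.ofReal ((‖gradient u x‖ / 4) ^ p x * (1 / (4 * 8 ^ n)))
        * volume (ball (0 : Eu n) 1)
      ≤ liminf (fun j : ℕ => ∫⁻ y in {y | |u x - u y| ≤ 1},
          ENNReal.ofReal (((j:ℝ)+2)⁻¹ * |u x - u y| ^ (p x + ((j:ℝ)+2)⁻¹)
            / ‖x - y‖ ^ ((n : ℝ) + p x)) ∂volume) atTop := by
  set g := ‖gradient u x‖ with hg
  by_cases hgz : g = 0
  · have h0 : (g / 4 : ℝ) ^ p x = 0 := by
      rw [hgz, zero_div, Real.zero_rpow (by linarith [hp1 x])]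
    rw [h0]
    simp
  have hgpos : 0 < g := lt_of_le_of_ne (norm_nonneg _) (Ne.symm hgz)
  -- find δ
  have hd : HasGradientAt u (gradient u x) x := ((hu.differentiable (by norm_num)) x).hasGradientAt
  have h1 : ∀ᶠ y in 𝓝 x, |u y - u x - ⟪gradient u x, y - x⟫| ≤ g / 4 * ‖y - x‖ := by
    have h := (hasGradientAt_iff_isLittleO.mp hd).def (by positivity : (0:ℝ) < g / 4)
    filter_upwards [h] with y hy
    simpa [Real.norm_eq_abs] using hy
  have h2 : ∀ᶠ y in 𝓝 x, |u x - u y| ≤ 1 := by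
    have hc : ContinuousAt u x := hu.continuous.continuousAt
    have := Metric.tendsto_nhds.mp hc 1 one_pos
    filter_upwards [this] with y hy
    rw [abs_sub_comm]
    rw [Real.dist_eq] at hy
    linarith [le_of_lt hy]
  obtain ⟨δ₀, hδ₀, hδprop⟩ := Metric.eventually_nhds_iff.mp (h1.and h2)
  set δ := min (δ₀ / 2) 1 with hδ
  have hδ0 : 0 < δ := lt_min (by linarith) one_pos
  have hδ1 : δ ≤ 1 := min_le_right _ _
  have hδlt : δ < δ₀ := lt_of_le_of_lt (min_le_left _ _) (by linarith)
  have hder : ∀ y, dist y x < δ →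
      |u y - u x - ⟪gradient u x, y - x⟫| ≤ ‖gradient u x‖ / 4 * ‖y - x‖ :=
    fun y hy => (hδprop (lt_trans hy hδlt)).1
  have hcont : ∀ y, dist y x < δ → |u x - u y| ≤ 1 :=
    fun y hy => (hδprop (lt_trans hy hδlt)).2
  have hεmem : ∀ j : ℕ, ((j:ℝ)+2)⁻¹ ∈ Set.Ioo (0:ℝ) 1 := by
    intro j
    constructor
    · positivity
    · apply inv_lt_one_of_one_lt₀
      have : (0:ℝ) ≤ (j:ℝ) := Nat.cast_nonneg j
      linarith
  have hkey : ∀ j : ℕ,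
      ENNReal.ofReal ((g / 4) ^ (p x + ((j:ℝ)+2)⁻¹) * δ ^ (((j:ℝ)+2)⁻¹) / (4 * 8 ^ n))
          * volume (ball (0 : Eu n) 1)
        ≤ ∫⁻ y in {y | |u x - u y| ≤ 1},
            ENNReal.ofReal (((j:ℝ)+2)⁻¹ * |u x - u y| ^ (p x + ((j:ℝ)+2)⁻¹)
              / ‖x - y‖ ^ ((n : ℝ) + p x)) ∂volume :=
    fun j => key_lemma hn u x (p x) (hp1 x) (hεmem j) hδ0 hδ1 hder hcont
  -- tendsto of the lower bound
  have hε0 : Tendsto (fun j : ℕ => ((j:ℝ)+2)⁻¹) atTop (𝓝 0) :=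
    tendsto_inv_atTop_zero.comp (tendsto_atTop_add_const_right _ 2 tendsto_natCast_atTop_atTop)
  have hreal : Tendsto (fun t : ℝ => (g / 4) ^ (p x + t) * δ ^ t / (4 * 8 ^ n)) (𝓝 0)
      (𝓝 ((g / 4) ^ (p x + 0) * δ ^ (0:ℝ) / (4 * 8 ^ n))) := by
    apply ContinuousAt.tendsto
    apply ContinuousAt.div_const
    apply ContinuousAt.mul
    · exact (Real.continuousAt_const_rpow (by positivity : (g/4 : ℝ) ≠ 0)).comp
        ((continuous_const.add continuous_id).continuousAt)
    · exact Real.continuousAt_const_rpow (by positivity : (δ : ℝ) ≠ 0)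
  have htends : Tendsto (fun j : ℕ =>
      ENNReal.ofReal ((g / 4) ^ (p x + ((j:ℝ)+2)⁻¹) * δ ^ (((j:ℝ)+2)⁻¹) / (4 * 8 ^ n))
        * volume (ball (0 : Eu n) 1)) atTop
      (𝓝 (ENNReal.ofReal ((g / 4) ^ (p x + 0) * δ ^ (0:ℝ) / (4 * 8 ^ n))
        * volume (ball (0 : Eu n) 1))) := by
    apply ENNReal.Tendsto.mul_const
    · exact (ENNReal.continuous_ofReal.tendsto _).comp (hreal.comp hε0)
    · exact Or.inr measure_ball_lt_top.ne
  have heq2 : ENNReal.ofReal ((g / 4) ^ (p x + 0) * δ ^ (0:ℝ) / (4 * 8 ^ n))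
      = ENNReal.ofReal ((g / 4) ^ p x * (1 / (4 * 8 ^ n))) := by
    congr 1
    rw [add_zero, Real.rpow_zero]
    ring
  calc ENNReal.ofReal ((g / 4) ^ p x * (1 / (4 * 8 ^ n))) * volume (ball (0 : Eu n) 1)
      = liminf (fun j : ℕ =>
          ENNReal.ofReal ((g / 4) ^ (p x + ((j:ℝ)+2)⁻¹) * δ ^ (((j:ℝ)+2)⁻¹) / (4 * 8 ^ n))
            * volume (ball (0 : Eu n) 1)) atTop := by
        rw [htends.liminf_eq, heq2]
  _ ≤ liminf (fun j : ℕ => ∫⁻ y in {y | |u x - u y| ≤ 1},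
        ENNReal.ofReal (((j:ℝ)+2)⁻¹ * |u x - u y| ^ (p x + ((j:ℝ)+2)⁻¹)
          / ‖x - y‖ ^ ((n : ℝ) + p x)) ∂volume) atTop :=
      liminf_le_liminf (Eventually.of_forall hkey)

/-- Sufficient condition (a): a bounded `C²` function in `L^{p(·)}(ℝ^n)` whose truncated
Nguyen-type quantities are uniformly bounded belongs to `W^{1,p(·)}(ℝ^n)`. -/
theorem stmt15 (n : ℕ) (hn : 1 ≤ n) (p : Eu n → ℝ) (hpmeas : Measurable p)
    (hp1 : ∀ x, 1 ≤ p x) (pm pp : ℝ) (hpm : pm = essInf p volume)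
    (hpp : pp = essSup p volume) (h1m : 1 < pm) (hmp : pm ≤ pp)
    (u : Eu n → ℝ) (hu : ContDiff ℝ 2 u) (hub : ∃ M : ℝ, ∀ x, |u x| ≤ M)
    (huLp : (∫⁻ x, (‖u x‖₊ : ℝ≥0∞) ^ p x ∂volume) < ⊤)
    (hsup : (⨆ ε ∈ Set.Ioo (0:ℝ) 1,
          ∫⁻ x, ∫⁻ y in {y | |u x - u y| ≤ 1},
            ENNReal.ofReal (ε * |u x - u y| ^ (p x + ε) / ‖x - y‖ ^ ((n : ℝ) + p x))
              ∂volume ∂volume)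
        + (∫⁻ x, ∫⁻ y in {y | 1 < |u x - u y|},
            ENNReal.ofReal (1 / ‖x - y‖ ^ ((n : ℝ) + p x)) ∂volume ∂volume) < ⊤) :
    (∫⁻ x, (‖gradient u x‖₊ : ℝ≥0∞) ^ p x ∂volume) < ⊤ := by
  haveI : Nonempty (Fin n) := ⟨⟨0, hn⟩⟩
  -- a.e. upper bound on p
  obtain ⟨A, hA⟩ : ∃ A : ℝ, ∀ᵐ x ∂(volume : Measure (Eu n)), p x ≤ A := by
    by_contra hcon
    push_neg at hcon
    have hempty : {a : ℝ | (volume : Measure (Eu n)) {x | a < p x} = 0} = ∅ := by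
      ext a
      simp only [Set.mem_setOf_eq, Set.mem_empty_iff_false, iff_false]
      intro ha
      exact hcon a (by
        rw [MeasureTheory.ae_iff]
        convert ha using 2
        ext x
        simp)
    have hzero : essSup p (volume : Measure (Eu n)) = 0 := by
      rw [essSup_eq_sInf, hempty, Real.sInf_empty]
    rw [hzero] at hpp
    linarith
  set C1 := ⨆ ε ∈ Set.Ioo (0:ℝ) 1,
      ∫⁻ x, ∫⁻ y in {y | |u x - u y| ≤ 1},
        ENNReal.ofReal (ε * |u x - u y| ^ (p x + ε) / ‖x - y‖ ^ ((n : ℝ) + p x))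
          ∂volume ∂volume with hC1
  have hC1top : C1 < ⊤ := lt_of_le_of_lt le_self_add hsup
  have hεmem : ∀ j : ℕ, ((j:ℝ)+2)⁻¹ ∈ Set.Ioo (0:ℝ) 1 := by
    intro j
    refine ⟨by positivity, ?_⟩
    apply inv_lt_one_of_one_lt₀
    have : (0:ℝ) ≤ (j:ℝ) := Nat.cast_nonneg j
    linarith
  have hIle : ∀ j : ℕ,
      (∫⁻ x, ∫⁻ y in {y | |u x - u y| ≤ 1},
        ENNReal.ofReal (((j:ℝ)+2)⁻¹ * |u x - u y| ^ (p x + ((j:ℝ)+2)⁻¹)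
          / ‖x - y‖ ^ ((n : ℝ) + p x)) ∂volume ∂volume) ≤ C1 := by
    intro j
    exact le_biSup (f := fun ε => ∫⁻ x, ∫⁻ y in {y | |u x - u y| ≤ 1},
      ENNReal.ofReal (ε * |u x - u y| ^ (p x + ε) / ‖x - y‖ ^ ((n : ℝ) + p x))
        ∂volume ∂volume) (hεmem j)
  -- Fatou
  have hFatou : (∫⁻ x, ENNReal.ofReal ((‖gradient u x‖ / 4) ^ p x * (1 / (4 * 8 ^ n)))
      * volume (ball (0 : Eu n) 1) ∂volume) ≤ C1 := by
    calc (∫⁻ x, ENNReal.ofReal ((‖gradient u x‖ / 4) ^ p x * (1 / (4 * 8 ^ n)))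
        * volume (ball (0 : Eu n) 1) ∂volume)
        ≤ ∫⁻ x, liminf (fun j : ℕ => ∫⁻ y in {y | |u x - u y| ≤ 1},
            ENNReal.ofReal (((j:ℝ)+2)⁻¹ * |u x - u y| ^ (p x + ((j:ℝ)+2)⁻¹)
              / ‖x - y‖ ^ ((n : ℝ) + p x)) ∂volume) atTop ∂volume :=
          lintegral_mono fun x => liminf_bound hn u hu p hp1 x
    _ ≤ liminf (fun j : ℕ => ∫⁻ x, ∫⁻ y in {y | |u x - u y| ≤ 1},
            ENNReal.ofReal (((j:ℝ)+2)⁻¹ * |u x - u y| ^ (p x + ((j:ℝ)+2)⁻¹)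
              / ‖x - y‖ ^ ((n : ℝ) + p x)) ∂volume ∂volume) atTop :=
          lintegral_liminf_le fun j => meas_I p hpmeas u hu.continuous.measurable _
    _ ≤ C1 := liminf_le_of_frequently_le' (Frequently.of_forall hIle)
  -- pull out the constant
  set c2 := ENNReal.ofReal (1 / (4 * 8 ^ n)) * volume (ball (0 : Eu n) 1) with hc2
  have hc2ne0 : c2 ≠ 0 := by
    apply mul_ne_zero
    · exact (ENNReal.ofReal_pos.mpr (by positivity)).ne'
    · exact (measure_ball_pos volume _ one_pos).ne'
  have hc2top : c2 ≠ ⊤ := ENNReal.mul_ne_top ENNReal.ofReal_ne_top measure_ball_lt_top.ne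
  have hJc : (∫⁻ x, ENNReal.ofReal ((‖gradient u x‖ / 4) ^ p x) ∂volume) * c2 ≤ C1 := by
    rw [← lintegral_mul_const' c2 _ hc2top]
    refine le_trans (le_of_eq (lintegral_congr fun x => ?_)) hFatou
    rw [hc2, ofReal_mul_shift _ _ (Real.rpow_nonneg (by positivity) _)]
  have hJ : (∫⁻ x, ENNReal.ofReal ((‖gradient u x‖ / 4) ^ p x) ∂volume) < ⊤ := by
    refine lt_of_le_of_lt ((ENNReal.le_div_iff_mul_le (Or.inl hc2ne0) (Or.inl hc2top)).mpr hJc) ?_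
    exact ENNReal.div_lt_top hC1top.ne hc2ne0
  -- conclude
  set A' := max A 0 with hA'
  have hfin : ∀ᵐ x ∂(volume : Measure (Eu n)),
      (‖gradient u x‖₊ : ℝ≥0∞) ^ p x ≤
        ENNReal.ofReal ((4:ℝ) ^ A') * ENNReal.ofReal ((‖gradient u x‖ / 4) ^ p x) := by
    filter_upwards [hA] with x hx
    have h0 : (0:ℝ) ≤ ‖gradient u x‖ := norm_nonneg _
    have hp0 : (0:ℝ) ≤ p x := by linarith [hp1 x]
    have e1 : ((‖gradient u x‖₊ : ℝ≥0∞)) ^ p x = ENNReal.ofReal (‖gradient u x‖ ^ p x) := by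
      rw [show ((‖gradient u x‖₊ : ℝ≥0∞)) = ENNReal.ofReal ‖gradient u x‖ from (ofReal_norm _).symm, ENNReal.ofReal_rpow_of_nonneg h0 hp0]
    rw [e1, ← ENNReal.ofReal_mul (by positivity : (0:ℝ) ≤ (4:ℝ) ^ A')]
    apply ENNReal.ofReal_le_ofReal
    have e2 : ‖gradient u x‖ ^ p x = (4:ℝ) ^ p x * (‖gradient u x‖ / 4) ^ p x := by
      rw [← Real.mul_rpow (by norm_num) (by positivity)]
      congr 1
      ring
    rw [e2]
    apply mul_le_mul_of_nonneg_right _ (Real.rpow_nonneg (by positivity) _)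
    exact Real.rpow_le_rpow_of_exponent_le (by norm_num) (le_trans hx (le_max_left _ _))
  calc (∫⁻ x, (‖gradient u x‖₊ : ℝ≥0∞) ^ p x ∂volume)
      ≤ ∫⁻ x, ENNReal.ofReal ((4:ℝ) ^ A')
          * ENNReal.ofReal ((‖gradient u x‖ / 4) ^ p x) ∂volume := lintegral_mono_ae hfin
  _ = ENNReal.ofReal ((4:ℝ) ^ A')
        * ∫⁻ x, ENNReal.ofReal ((‖gradient u x‖ / 4) ^ p x) ∂volume :=
      lintegral_const_mul' _ _ ENNReal.ofReal_ne_top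
  _ < ⊤ := ENNReal.mul_lt_top ENNReal.ofReal_lt_top hJ
end
end

section
/- Let n ≥ 1, let p : ℝ^n → [1,∞) be measurable with 1 < p^- ≤ p^+ < ∞, and let u ∈ L^{p(·)}(ℝ^n) ∩ C^2_b(ℝ^n) be a bounded C^2 function. If sup_{0<δ<1} ∬_{{(x,y) ∈ ℝ^n×ℝ^n : |u(x)−u(y)| > δ}} δ^{p(x)} / |x−y|^{n+p(x)} dx dy < +∞, then ∫_{ℝ^n} |∇u(x)|^{p(x)} dx < ∞; that is, u ∈ W^{1,p(·)}(ℝ^n). -/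
set_option maxHeartbeats 1000000


open MeasureTheory Filter Set Metric
open scoped ENNReal NNReal Topology

noncomputable section

/-- Elementary `rpow` computation used in the pointwise lower bound. -/
lemma nguyen_calc (n : ℕ) {r L : ℝ} (s : ℝ) (hr : 0 < r) (hL : 0 ≤ L) :
    (r/2)^n * ((r*L/4) ^ s / (2*r) ^ ((n:ℝ) + s)) = (2:ℝ) ^ (-(2*(n:ℝ))) * (L/8) ^ s := by
  have h2r : (0:ℝ) < 2 * r := by linarith
  have e0 : r * L / 4 = r * (L/8) * 2 := by ring
  have e1 : (r*L/4) ^ s = r ^ s * (L/8) ^ s * 2 ^ s := by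
    rw [e0, Real.mul_rpow (by positivity) (by norm_num), Real.mul_rpow hr.le (by positivity)]
  have e2 : (2*r) ^ ((n:ℝ) + s) = 2^n * r^n * ((2:ℝ) ^ s * r ^ s) := by
    rw [Real.rpow_add h2r, Real.rpow_natCast, Real.mul_rpow (by norm_num) hr.le, mul_pow]
  have e3 : (2:ℝ) ^ (-(2*(n:ℝ))) = ((2:ℝ)^n * (2:ℝ)^n)⁻¹ := by
    have h : -(2*(n:ℝ)) = -((n:ℝ) + (n:ℝ)) := by ring
    rw [h, Real.rpow_neg (by norm_num), Real.rpow_add (by norm_num), Real.rpow_natCast]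
  rw [e1, e2, e3]
  have hrs : (0:ℝ) < r ^ s := Real.rpow_pos_of_pos hr s
  have h2s : (0:ℝ) < (2:ℝ) ^ s := Real.rpow_pos_of_pos (by norm_num) s
  have h2n : (0:ℝ) < (2:ℝ) ^ n := by positivity
  have hrn : (0:ℝ) < r ^ n := by positivity
  field_simp
  ring_nf
  rw [mul_assoc, ← mul_pow]
  norm_num

/-- Pointwise lower bound: near a point of differentiability with nonzero gradient, the
Nguyen functional at small `δ` dominates a fixed multiple of `|∇u(x)|^s`. -/
lemma nguyen_pointwise {n : ℕ} (hn : 1 ≤ n) {u : Eu n → ℝ} {x : Eu n}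
    (hd : HasGradientAt u (gradient u x) x) {s : ℝ} (hs : 1 ≤ s) :
    ∃ δ₀ : ℝ, 0 < δ₀ ∧ ∀ δ : ℝ, 0 < δ → δ < δ₀ →
      volume (ball (0:Eu n) 1) *
          ENNReal.ofReal ((2:ℝ) ^ (-(2*(n:ℝ))) * (‖gradient u x‖/8) ^ s)
        ≤ ∫⁻ y in {y | δ < |u x - u y|},
            ENNReal.ofReal (δ ^ s / ‖x - y‖ ^ ((n:ℝ) + s)) ∂volume := by
  haveI : Nonempty (Fin n) := ⟨⟨0, hn⟩⟩
  set g := gradient u x with hg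
  rcases eq_or_lt_of_le (norm_nonneg g) with hL0 | hL0
  · refine ⟨1, one_pos, fun δ _ _ => ?_⟩
    have h8 : ‖g‖/8 = 0 := by rw [← hL0]; norm_num
    rw [h8, Real.zero_rpow (by linarith : s ≠ 0), mul_zero, ENNReal.ofReal_zero, mul_zero]
    exact zero_le
  set L := ‖g‖ with hLdef
  have hLpos : 0 < L := hL0
  have hdo := hasGradientAt_iff_isLittleO.1 hd
  have hev := hdo.def (show (0:ℝ) < L/8 by positivity)
  rw [Metric.eventually_nhds_iff] at hev
  obtain ⟨ρ, hρ, hsm⟩ := hev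
  refine ⟨ρ * L / 6, by positivity, fun δ hδ hδρ => ?_⟩
  set r := 4 * δ / L with hrdef
  have hr : 0 < r := by positivity
  have hδeq : δ = r * L / 4 := by rw [hrdef, div_mul_cancel₀ _ hLpos.ne']; ring
  have hr23 : r < 2 * ρ / 3 := by
    rw [hrdef, div_lt_iff₀ hLpos]; nlinarith
  set e : Eu n := L⁻¹ • g with he
  have hee : ‖e‖ = 1 := by
    rw [he, norm_smul, norm_inv, norm_norm]
    field_simp
    exact div_self hLpos.ne'
  have hre : ‖r • e‖ = r := by
    rw [norm_smul, Real.norm_eq_abs, abs_of_pos hr, hee, mul_one]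
  set B := ball (x + r • e) (r/2) with hB
  -- basic estimates for points of B
  have hnorm_le : ∀ y ∈ B, ‖y - x‖ ≤ 3/2 * r ∧ r/2 ≤ ‖x - y‖ := by
    intro y hy
    rw [hB, mem_ball, dist_eq_norm] at hy
    have hdecomp : y - x = (y - (x + r • e)) + r • e := by abel
    constructor
    · calc ‖y - x‖ ≤ ‖y - (x + r • e)‖ + ‖r • e‖ := by rw [hdecomp]; exact norm_add_le _ _
        _ ≤ r/2 + r := by rw [hre]; linarith
        _ = 3/2 * r := by ring
    · have htri : dist x (x + r • e) ≤ dist x y + dist y (x + r • e) := dist_triangle _ _ _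
      have h1 : dist x (x + r • e) = r := by
        rw [dist_self_add_right, hre]
      have h2 : dist y (x + r • e) < r/2 := by
        rw [dist_eq_norm]; exact hy
      rw [← dist_eq_norm]
      linarith
  -- B is contained in the superlevel set
  have hsub : B ⊆ {y | δ < |u x - u y|} := by
    intro y hy
    obtain ⟨hle, _⟩ := hnorm_le y hy
    have hyB := hy
    rw [hB, mem_ball, dist_eq_norm] at hyB
    have hyρ : dist y x < ρ := by
      rw [dist_eq_norm]; linarith
    have hinner : r * L / 2 ≤ (inner ℝ g (y - x) : ℝ) := by
      have hdecomp : y - x = (y - (x + r • e)) + r • e := by abel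
      have h1 : (inner ℝ g (y - x) : ℝ)
          = (inner ℝ g (y - (x + r • e)) : ℝ) + (inner ℝ g (r • e) : ℝ) := by
        rw [hdecomp, inner_add_right]
      have h2 : (inner ℝ g (r • e) : ℝ) = r * L := by
        rw [he, real_inner_smul_right, real_inner_smul_right,
          real_inner_self_eq_norm_mul_norm, ← hLdef]
        field_simp
      have h3 : |(inner ℝ g (y - (x + r • e)) : ℝ)| ≤ L * (r/2) := by
        calc |(inner ℝ g (y - (x + r • e)) : ℝ)| ≤ ‖g‖ * ‖y - (x + r • e)‖ :=
              abs_real_inner_le_norm _ _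
          _ ≤ L * (r/2) := by
              rw [← hLdef]
              exact mul_le_mul_of_nonneg_left hyB.le hLpos.le
      have h4 : -(L * (r/2)) ≤ (inner ℝ g (y - (x + r • e)) : ℝ) := neg_le_of_abs_le h3
      rw [h1]; nlinarith
    have htay : |u y - u x - (inner ℝ g (y - x) : ℝ)| ≤ L/8 * ‖y - x‖ := by
      have := hsm hyρ
      simpa [Real.norm_eq_abs] using this
    have habs : L/8 * ‖y - x‖ ≤ L/8 * (3/2 * r) :=
      mul_le_mul_of_nonneg_left hle (by positivity)
    have hA := abs_le.1 htay
    have h5 : r * L / 2 - L/8 * (3/2 * r) ≤ u y - u x := by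
      linarith [hA.1, habs, hinner]
    have h7 : δ < u y - u x := by
      rw [hδeq]; nlinarith [mul_pos hr hLpos]
    show δ < |u x - u y|
    calc δ < u y - u x := h7
      _ = -(u x - u y) := by ring
      _ ≤ |u x - u y| := neg_le_abs _
  -- lower bound for the integrand on B
  have hptwise : ∀ y ∈ B,
      ENNReal.ofReal (δ ^ s / (2*r) ^ ((n:ℝ) + s))
        ≤ ENNReal.ofReal (δ ^ s / ‖x - y‖ ^ ((n:ℝ) + s)) := by
    intro y hy
    obtain ⟨hle, hge⟩ := hnorm_le y hy
    have hxy_pos : (0:ℝ) < ‖x - y‖ := lt_of_lt_of_le (by positivity) hge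
    have hxy_le : ‖x - y‖ ≤ 2 * r := by rw [norm_sub_rev]; linarith
    have hns : (0:ℝ) ≤ (n:ℝ) + s := by
      have := Nat.cast_nonneg (α := ℝ) n; linarith
    have hrp : ‖x - y‖ ^ ((n:ℝ) + s) ≤ (2*r) ^ ((n:ℝ) + s) :=
      Real.rpow_le_rpow (norm_nonneg _) hxy_le hns
    apply ENNReal.ofReal_le_ofReal
    apply div_le_div_of_nonneg_left _ (Real.rpow_pos_of_pos hxy_pos _) hrp
    positivity
  -- put things together
  have hBmeas : MeasurableSet B := measurableSet_ball
  have hvolB : volume B = ENNReal.ofReal ((r/2)^n) * volume (ball (0:Eu n) 1) := by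
    rw [hB, Measure.addHaar_ball volume _ (by positivity : (0:ℝ) ≤ r/2),
      finrank_euclideanSpace_fin]
  have hcalc : δ ^ s / (2*r) ^ ((n:ℝ)+s) * (r/2)^n
      = (2:ℝ) ^ (-(2*(n:ℝ))) * (L/8) ^ s := by
    rw [hδeq, mul_comm]
    exact nguyen_calc n s hr hLpos.le
  calc volume (ball (0:Eu n) 1) * ENNReal.ofReal ((2:ℝ) ^ (-(2*(n:ℝ))) * (L/8) ^ s)
      = ENNReal.ofReal (δ ^ s / (2*r) ^ ((n:ℝ) + s)) * volume B := by
        rw [hvolB, ← hcalc, ENNReal.ofReal_mul (by positivity)]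
        ring
    _ = ∫⁻ _ in B, ENNReal.ofReal (δ ^ s / (2*r) ^ ((n:ℝ) + s)) ∂volume := by
        rw [setLIntegral_const]
    _ ≤ ∫⁻ y in B, ENNReal.ofReal (δ ^ s / ‖x - y‖ ^ ((n:ℝ) + s)) ∂volume := by
        refine lintegral_mono_ae ((ae_restrict_iff' hBmeas).2 (ae_of_all _ fun y hy => ?_))
        exact hptwise y hy
    _ ≤ ∫⁻ y in {y | δ < |u x - u y|},
          ENNReal.ofReal (δ ^ s / ‖x - y‖ ^ ((n:ℝ) + s)) ∂volume :=
        lintegral_mono_set hsub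

/-- Sufficient condition (b): a bounded `C²` function in `L^{p(·)}(ℝ^n)` whose
Nguyen-type quantities are uniformly bounded for `δ ∈ (0,1)` belongs to
`W^{1,p(·)}(ℝ^n)`. -/
theorem stmt16 (n : ℕ) (hn : 1 ≤ n) (p : Eu n → ℝ) (hpmeas : Measurable p)
    (hp1 : ∀ x, 1 ≤ p x) (pm pp : ℝ) (hpm : pm = essInf p volume)
    (hpp : pp = essSup p volume) (h1m : 1 < pm) (hmp : pm ≤ pp)
    (u : Eu n → ℝ) (hu : ContDiff ℝ 2 u) (hub : ∃ M : ℝ, ∀ x, |u x| ≤ M)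
    (huLp : (∫⁻ x, (‖u x‖₊ : ℝ≥0∞) ^ p x ∂volume) < ⊤)
    (hsup : (⨆ δ ∈ Set.Ioo (0:ℝ) 1,
        ∫⁻ x, ∫⁻ y in {y | δ < |u x - u y|},
          ENNReal.ofReal (δ ^ p x / ‖x - y‖ ^ ((n : ℝ) + p x)) ∂volume ∂volume) < ⊤) :
    (∫⁻ x, (‖gradient u x‖₊ : ℝ≥0∞) ^ p x ∂volume) < ⊤ := by
  classical
  haveI : Nonempty (Fin n) := ⟨⟨0, hn⟩⟩
  -- a.e. bound p ≤ pp
  have hae : ∀ᵐ x : Eu n ∂volume, p x ≤ pp := by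
    by_cases hbdd : IsBoundedUnder (· ≤ ·) (ae (volume : Measure (Eu n))) p
    · have h := eventually_le_limsup (u := p) (f := ae (volume : Measure (Eu n))) hbdd
      rw [hpp]
      exact h
    · exfalso
      have hlim : Filter.limsup p (ae (volume : Measure (Eu n))) = 0 := by
        rw [Filter.limsup_eq]
        have hempty : {a : ℝ | ∀ᶠ x in ae (volume : Measure (Eu n)), p x ≤ a} = ∅ := by
          rw [eq_empty_iff_forall_notMem]
          intro a ha
          exact hbdd ⟨a, by rwa [eventually_map]⟩
        rw [hempty]
        exact Real.sInf_empty
      have : pp = 0 := by rw [hpp]; exact hlim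
      linarith
  -- the family of functionals
  set Q : ℝ → Eu n → ℝ≥0∞ := fun δ x =>
    ∫⁻ y in {y | δ < |u x - u y|},
      ENNReal.ofReal (δ ^ p x / ‖x - y‖ ^ ((n:ℝ) + p x)) ∂volume with hQ
  have hsup' : (⨆ δ ∈ Set.Ioo (0:ℝ) 1, ∫⁻ x, Q δ x ∂volume) < ⊤ := by
    simpa only [hQ] using hsup
  -- measurability of the functionals
  have hucont : Continuous u := hu.continuous
  have hQmeas : ∀ δ : ℝ, Measurable (Q δ) := by
    intro δ
    have hfun : Measurable fun q : Eu n × Eu n =>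
        ENNReal.ofReal (δ ^ p q.1 / ‖q.1 - q.2‖ ^ ((n:ℝ) + p q.1)) := by
      apply Measurable.ennreal_ofReal
      exact (measurable_const.pow (hpmeas.comp measurable_fst)).div
        (((measurable_fst.sub measurable_snd).norm).pow
          (measurable_const.add (hpmeas.comp measurable_fst)))
    have hset : MeasurableSet {q : Eu n × Eu n | δ < |u q.1 - u q.2|} :=
      measurableSet_lt measurable_const
        (((hucont.comp continuous_fst).sub (hucont.comp continuous_snd)).abs.measurable)
    have hjoint : Measurable fun x : Eu n =>
        ∫⁻ y, Set.indicator {q : Eu n × Eu n | δ < |u q.1 - u q.2|}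
          (fun q => ENNReal.ofReal (δ ^ p q.1 / ‖q.1 - q.2‖ ^ ((n:ℝ) + p q.1)))
          (x, y) ∂volume :=
      Measurable.lintegral_prod_right' (hfun.indicator hset)
    have hQx : ∀ x : Eu n, Q δ x
        = ∫⁻ y, Set.indicator {q : Eu n × Eu n | δ < |u q.1 - u q.2|}
            (fun q => ENNReal.ofReal (δ ^ p q.1 / ‖q.1 - q.2‖ ^ ((n:ℝ) + p q.1)))
            (x, y) ∂volume := by
      intro x
      have hsetx : MeasurableSet {y : Eu n | δ < |u x - u y|} :=
        measurableSet_lt measurable_const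
          ((continuous_const.sub hucont).abs.measurable)
      have hind : (fun y : Eu n => Set.indicator {q : Eu n × Eu n | δ < |u q.1 - u q.2|}
            (fun q => ENNReal.ofReal (δ ^ p q.1 / ‖q.1 - q.2‖ ^ ((n:ℝ) + p q.1))) (x, y))
          = (fun y : Eu n => Set.indicator {y : Eu n | δ < |u x - u y|}
            (fun y => ENNReal.ofReal (δ ^ p x / ‖x - y‖ ^ ((n:ℝ) + p x))) y) := by
        funext y
        by_cases hy : δ < |u x - u y| <;>
          simp [Set.indicator, hy]
      simp only [hQ]
      rw [← lintegral_indicator hsetx, ← hind]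
    have : Q δ = fun x => ∫⁻ y, Set.indicator {q : Eu n × Eu n | δ < |u q.1 - u q.2|}
            (fun q => ENNReal.ofReal (δ ^ p q.1 / ‖q.1 - q.2‖ ^ ((n:ℝ) + p q.1)))
            (x, y) ∂volume := funext hQx
    rw [this]
    exact hjoint
  -- the sequence of deltas
  set δk : ℕ → ℝ := fun k => ((k:ℝ) + 2)⁻¹ with hδkdef
  have hδk_pos : ∀ k, 0 < δk k := fun k => by positivity
  have hδk_lt1 : ∀ k, δk k < 1 := by
    intro k
    rw [hδkdef]
    simp only
    rw [inv_lt_one_iff₀]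
    right
    have := Nat.cast_nonneg (α := ℝ) k
    linarith
  have hδk_tendsto : Tendsto δk atTop (𝓝 (0:ℝ)) := by
    apply Filter.Tendsto.comp tendsto_inv_atTop_zero
    apply tendsto_atTop_add_const_right
    exact tendsto_natCast_atTop_atTop
  -- Fatou and the sup bound
  have hFatou : (∫⁻ x, liminf (fun k => Q (δk k) x) atTop ∂volume)
      ≤ liminf (fun k => ∫⁻ x, Q (δk k) x ∂volume) atTop :=
    lintegral_liminf_le fun k => hQmeas (δk k)
  have hQle : ∀ k, (∫⁻ x, Q (δk k) x ∂volume)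
      ≤ ⨆ δ ∈ Set.Ioo (0:ℝ) 1, ∫⁻ x, Q δ x ∂volume := fun k =>
    le_biSup (fun δ => ∫⁻ x, Q δ x ∂volume)
      (show δk k ∈ Set.Ioo (0:ℝ) 1 from ⟨hδk_pos k, hδk_lt1 k⟩)
  have hliminf_le : liminf (fun k => ∫⁻ x, Q (δk k) x ∂volume) atTop
      ≤ ⨆ δ ∈ Set.Ioo (0:ℝ) 1, ∫⁻ x, Q δ x ∂volume := by
    refine liminf_le_of_le (by isBoundedDefault) fun b hb => ?_
    obtain ⟨k, hk⟩ := hb.exists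
    exact hk.trans (hQle k)
  -- the unit ball volume
  set V := volume (ball (0:Eu n) 1) with hV
  have hV0 : V ≠ 0 := (measure_ball_pos volume _ one_pos).ne'
  have hVtop : V ≠ ⊤ := measure_ball_lt_top.ne
  set C : ℝ≥0∞ := ENNReal.ofReal ((8:ℝ) ^ pp * (2:ℝ) ^ (2*(n:ℝ))) * V⁻¹ with hC
  have hCtop : C ≠ ⊤ :=
    ENNReal.mul_ne_top ENNReal.ofReal_ne_top (ENNReal.inv_ne_top.2 hV0)
  -- pointwise bound
  have hpt : ∀ x : Eu n, p x ≤ pp →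
      (‖gradient u x‖₊ : ℝ≥0∞) ^ p x ≤ C * liminf (fun k => Q (δk k) x) atTop := by
    intro x hx
    set L := ‖gradient u x‖ with hL
    have hdiff : HasGradientAt u (gradient u x) x :=
      ((hu.differentiable (by norm_num)) x).hasGradientAt
    obtain ⟨δ₀, hδ₀, hlb⟩ := nguyen_pointwise hn hdiff (hp1 x)
    have hev : ∀ᶠ k in atTop,
        V * ENNReal.ofReal ((2:ℝ) ^ (-(2*(n:ℝ))) * (L/8) ^ p x) ≤ Q (δk k) x := by
      filter_upwards [hδk_tendsto.eventually_lt_const hδ₀] with k hk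
      exact hlb (δk k) (hδk_pos k) hk
    have hFx : V * ENNReal.ofReal ((2:ℝ) ^ (-(2*(n:ℝ))) * (L/8) ^ p x)
        ≤ liminf (fun k => Q (δk k) x) atTop :=
      le_liminf_of_le (by isBoundedDefault) hev
    have hpx0 : (0:ℝ) ≤ p x := by linarith [hp1 x]
    have h1 : (‖gradient u x‖₊ : ℝ≥0∞) ^ p x = ENNReal.ofReal (L ^ p x) := by
      rw [show ((‖gradient u x‖₊ : ℝ≥0∞)) = ENNReal.ofReal ‖gradient u x‖ from (ofReal_norm _).symm, ENNReal.ofReal_rpow_of_nonneg (norm_nonneg _) hpx0]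
    have h22 : (2:ℝ) ^ (2*(n:ℝ)) * (2:ℝ) ^ (-(2*(n:ℝ))) = 1 := by
      rw [← Real.rpow_add (by norm_num)]
      norm_num
    have h2 : L ^ p x
        ≤ (8:ℝ) ^ pp * ((2:ℝ) ^ (2*(n:ℝ)) * ((2:ℝ) ^ (-(2*(n:ℝ))) * (L/8) ^ p x)) := by
      have e : L ^ p x = (8:ℝ) ^ p x * (L/8) ^ p x := by
        have : L = 8 * (L/8) := by ring
        calc L ^ p x = (8 * (L/8)) ^ p x := by rw [← this]
          _ = (8:ℝ) ^ p x * (L/8) ^ p x :=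
            Real.mul_rpow (by norm_num) (by positivity)
      have h8 : (8:ℝ) ^ p x ≤ (8:ℝ) ^ pp :=
        Real.rpow_le_rpow_of_exponent_le (by norm_num) hx
      calc L ^ p x = (8:ℝ) ^ p x * (L/8) ^ p x := e
        _ ≤ (8:ℝ) ^ pp * (L/8) ^ p x :=
            mul_le_mul_of_nonneg_right h8 (by positivity)
        _ = (8:ℝ) ^ pp * ((2:ℝ) ^ (2*(n:ℝ)) * ((2:ℝ) ^ (-(2*(n:ℝ))) * (L/8) ^ p x)) := by
            rw [← mul_assoc ((2:ℝ) ^ (2*(n:ℝ))) _ _, h22, one_mul]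
    calc (‖gradient u x‖₊ : ℝ≥0∞) ^ p x = ENNReal.ofReal (L ^ p x) := h1
      _ ≤ ENNReal.ofReal ((8:ℝ) ^ pp *
            ((2:ℝ) ^ (2*(n:ℝ)) * ((2:ℝ) ^ (-(2*(n:ℝ))) * (L/8) ^ p x))) :=
          ENNReal.ofReal_le_ofReal h2
      _ = ENNReal.ofReal ((8:ℝ) ^ pp * (2:ℝ) ^ (2*(n:ℝ)))
            * ENNReal.ofReal ((2:ℝ) ^ (-(2*(n:ℝ))) * (L/8) ^ p x) := by
          rw [← ENNReal.ofReal_mul (by positivity)]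
          ring_nf
      _ = C * (V * ENNReal.ofReal ((2:ℝ) ^ (-(2*(n:ℝ))) * (L/8) ^ p x)) := by
          rw [hC, mul_assoc, ← mul_assoc V⁻¹ V _, ENNReal.inv_mul_cancel hV0 hVtop, one_mul]
      _ ≤ C * liminf (fun k => Q (δk k) x) atTop := mul_le_mul_right hFx _
  -- put everything together
  have hmain : (∫⁻ x, (‖gradient u x‖₊ : ℝ≥0∞) ^ p x ∂volume)
      ≤ C * liminf (fun k => ∫⁻ x, Q (δk k) x ∂volume) atTop := by
    calc (∫⁻ x, (‖gradient u x‖₊ : ℝ≥0∞) ^ p x ∂volume)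
        ≤ ∫⁻ x, C * liminf (fun k => Q (δk k) x) atTop ∂volume :=
          lintegral_mono_ae (hae.mono fun x hx => hpt x hx)
      _ = C * ∫⁻ x, liminf (fun k => Q (δk k) x) atTop ∂volume :=
          lintegral_const_mul' _ _ hCtop
      _ ≤ C * liminf (fun k => ∫⁻ x, Q (δk k) x ∂volume) atTop :=
          mul_le_mul_right hFatou _
  have hfin : C * liminf (fun k => ∫⁻ x, Q (δk k) x ∂volume) atTop < ⊤ := by
    apply ENNReal.mul_lt_top hCtop.lt_top
    exact lt_of_le_of_lt hliminf_le hsup'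
  exact lt_of_le_of_lt hmain hfin
end
end

section
/- Let n ≥ 1, let p : ℝ^n → [1,∞) be bounded and measurable with p^- := ess inf p = 1 and p^+ := ess sup p < ∞, let u ∈ L^{p(·)}(ℝ^n), and set E := {x ∈ ℝ^n : p(x) = 1}. Assume that the interior int(E) of E is nonempty and that Λ := sup_{0<δ<1} ∬_{{(x,y) ∈ ℝ^n×ℝ^n : |u(x)−u(y)| > δ}} δ^{p(x)} / |x−y|^{n+p(x)} dx dy < +∞. Then sup over all balls B ⊂ int(E) of |B|^{−(n+1)/n} ∫_B ∫_B |u(x)−u(y)| dx dy < +∞, where |B| denotes the Lebesgue measure of B. -/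
open MeasureTheory Filter Set Metric
open scoped ENNReal NNReal Topology

noncomputable section

namespace BN17

theorem lint_half_smul (n : ℕ) (f : Eu n → ℝ≥0∞) (hf : Measurable f) (x : Eu n) :
    ∫⁻ y, f ((2:ℝ)⁻¹ • (x + y)) ∂volume = (2:ℝ≥0∞)^n * ∫⁻ w, f w ∂volume := by
  have h1 : ∀ y : Eu n, (2:ℝ)⁻¹ • (x + y) = (2:ℝ)⁻¹ • x + (2:ℝ)⁻¹ • y := by
    intro y; rw [smul_add]
  simp_rw [h1]
  have h2 : ∫⁻ y, f ((2:ℝ)⁻¹ • x + (2:ℝ)⁻¹ • y) ∂volume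
      = ∫⁻ y, f ((2:ℝ)⁻¹ • x + y) ∂(Measure.map (fun y : Eu n => (2:ℝ)⁻¹ • y) volume) := by
    exact (lintegral_map (hf.comp (measurable_const_add _)) (measurable_const_smul _)).symm
  rw [h2, Measure.map_addHaar_smul volume (by norm_num : ((2:ℝ)⁻¹ : ℝ) ≠ 0),
    lintegral_smul_measure]
  rw [lintegral_add_left_eq_self (fun y => f y) ((2:ℝ)⁻¹ • x)]
  congr 1
  rw [finrank_euclideanSpace_fin]
  rw [show |(((2:ℝ)⁻¹) ^ n)⁻¹| = (2:ℝ)^n by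
    rw [abs_of_nonneg (by positivity), ← inv_pow, inv_inv]]
  rw [ENNReal.ofReal_pow (by norm_num), ENNReal.ofReal_ofNat]

theorem lip_min (c a b : ℝ) : |min a c - min b c| ≤ |a - b| := by
  rcases le_total a c with h1|h1 <;> rcases le_total b c with h2|h2 <;>
    simp only [min_eq_left, min_eq_right, h1, h2] <;> rw [abs_le] <;>
    constructor <;> nlinarith [le_abs_self (a-b), neg_abs_le (a-b), abs_nonneg (a-b)]

theorem lip_max (c a b : ℝ) : |max a c - max b c| ≤ |a - b| := by
  rcases le_total a c with h1|h1 <;> rcases le_total b c with h2|h2 <;>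
    simp only [max_eq_left, max_eq_right, h1, h2] <;> rw [abs_le] <;>
    constructor <;> nlinarith [le_abs_self (a-b), neg_abs_le (a-b), abs_nonneg (a-b)]

def clamp (M : ℕ) (a : ℝ) : ℝ := max (min a M) (-(M:ℝ))

theorem clamp_lip (M : ℕ) (a b : ℝ) : |clamp M a - clamp M b| ≤ |a - b| := by
  exact le_trans (lip_max (-(M:ℝ)) (min a M) (min b M)) (lip_min _ a b)

theorem clamp_eq (M : ℕ) (a : ℝ) (h : |a| ≤ M) : clamp M a = a := by
  rcases abs_le.1 h with ⟨h1, h2⟩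
  unfold clamp
  rw [min_eq_left h2, max_eq_left h1]

theorem clamp_abs_le (M : ℕ) (a : ℝ) : |clamp M a| ≤ M := by
  unfold clamp
  rw [abs_le]
  refine ⟨le_max_right _ _, max_le (min_le_right _ _) (by simp)⟩

theorem clamp_comp (M M' : ℕ) (h : M ≤ M') (a : ℝ) :
    clamp M (clamp M' a) = clamp M a := by
  have hM : (M:ℝ) ≤ (M':ℝ) := by exact_mod_cast h
  have hM0 : (0:ℝ) ≤ (M:ℝ) := Nat.cast_nonneg M
  have hM0' : (0:ℝ) ≤ (M':ℝ) := Nat.cast_nonneg M'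
  rcases le_total a (-(M:ℝ)) with h1 | h1
  · have ht : clamp M' a ≤ -(M:ℝ) := by
      unfold clamp
      exact max_le (le_trans (min_le_left _ _) h1) (by linarith)
    have h3 : clamp M (clamp M' a) = -(M:ℝ) := by
      show max (min (clamp M' a) (M:ℝ)) (-(M:ℝ)) = -(M:ℝ)
      rw [min_eq_left (le_trans ht (by linarith)), max_eq_right ht]
    rw [h3]
    unfold clamp
    rw [min_eq_left (le_trans h1 (by linarith)), max_eq_right h1]
  · rcases le_total ((M:ℝ)) a with h2 | h2
    · have ht : (M:ℝ) ≤ clamp M' a := le_trans (le_min h2 hM) (le_max_left _ _)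
      have h3 : clamp M (clamp M' a) = (M:ℝ) := by
        show max (min (clamp M' a) (M:ℝ)) (-(M:ℝ)) = (M:ℝ)
        rw [min_eq_right ht, max_eq_left (by linarith)]
      rw [h3]
      unfold clamp
      rw [min_eq_right h2, max_eq_left (by linarith)]
    · rw [clamp_eq M' a (abs_le.2 ⟨by linarith, by linarith⟩)]

theorem clamp_mono_pair (M M' : ℕ) (h : M ≤ M') (a b : ℝ) :
    |clamp M a - clamp M b| ≤ |clamp M' a - clamp M' b| := by
  rw [← clamp_comp M M' h a, ← clamp_comp M M' h b]
  exact clamp_lip M _ _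

theorem meas_clamp (M : ℕ) {f : α → ℝ} [MeasurableSpace α] (hf : Measurable f) :
    Measurable (fun x => clamp M (f x)) := by
  unfold clamp
  exact ((hf.min measurable_const).max measurable_const)



/-- dyadic scales -/
def sc (r : ℝ) (j : ℕ) : ℝ := 2*r*((2:ℝ)⁻¹)^j

theorem sc_succ (r : ℝ) (j : ℕ) : sc r (j+1) = (2:ℝ)⁻¹ * sc r j := by
  unfold sc; ring

theorem sc_pos (r : ℝ) (hr : 0 < r) (j : ℕ) : 0 < sc r j := by
  unfold sc; positivity

open Classical in
/-- annulus pair indicator -/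
def pI (n : ℕ) (z : Eu n) (r a b : ℝ) (x y : Eu n) : ℝ≥0∞ :=
  if (x ∈ Metric.ball z r ∧ y ∈ Metric.ball z r ∧ a < dist x y ∧ dist x y ≤ b) then 1 else 0

def ker (n : ℕ) (x y : Eu n) : ℝ≥0∞ := ENNReal.ofReal ((‖x - y‖⁻¹) ^ (n+1))

open Classical in
def kerI (n : ℕ) (u : Eu n → ℝ) (x y : Eu n) : ℝ≥0∞ :=
  if 2⁻¹ < |u x - u y| then ker n x y else 0

def md {n : ℕ} (x y : Eu n) : Eu n := (2:ℝ)⁻¹ • (x + y)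

def gg (n : ℕ) (z : Eu n) (r : ℝ) (v : Eu n → ℝ) (j : ℕ) : ℝ≥0∞ :=
  ∫⁻ x, ∫⁻ y, pI n z r (sc r (j+1)) (sc r j) x y
    * ENNReal.ofReal (|v x - v y| - 1) ∂volume ∂volume

def ga (n : ℕ) (z : Eu n) (r : ℝ) (u : Eu n → ℝ) (j : ℕ) : ℝ≥0∞ :=
  ∫⁻ x, ∫⁻ y, pI n z r (sc r (j+1)) (sc r j) x y * kerI n u x y ∂volume ∂volume

theorem meas_pI_pair (n : ℕ) (z : Eu n) (r a b : ℝ) :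
    Measurable (fun q : Eu n × Eu n => pI n z r a b q.1 q.2) := by
  unfold pI
  have hS : MeasurableSet {q : Eu n × Eu n | q.1 ∈ Metric.ball z r ∧ q.2 ∈ Metric.ball z r
      ∧ a < dist q.1 q.2 ∧ dist q.1 q.2 ≤ b} := by
    refine (measurable_fst measurableSet_ball).inter ?_
    refine (measurable_snd measurableSet_ball).inter ?_
    refine (measurable_dist (measurableSet_Ioi (a := a))).inter
      (measurable_dist (measurableSet_Iic (a := b)))
  exact Measurable.ite hS measurable_const measurable_const

theorem meas_dsub_pair {n : ℕ} (v : Eu n → ℝ) (hv : Measurable v) (c : ℝ) :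
    Measurable (fun q : Eu n × Eu n => ENNReal.ofReal (|v q.1 - v q.2| - c)) :=
  ENNReal.measurable_ofReal.comp
    ((((hv.comp measurable_fst).sub (hv.comp measurable_snd)).abs).sub measurable_const)

theorem meas_ker_pair (n : ℕ) : Measurable (fun q : Eu n × Eu n => ker n q.1 q.2) := by
  unfold ker
  have h : Measurable fun q : Eu n × Eu n => ‖q.1 - q.2‖ :=
    (measurable_fst.sub measurable_snd).norm
  exact ENNReal.measurable_ofReal.comp (h.inv.pow_const _)

theorem meas_kerI_pair {n : ℕ} (u : Eu n → ℝ) (hu : Measurable u) :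
    Measurable (fun q : Eu n × Eu n => kerI n u q.1 q.2) := by
  unfold kerI
  have hS : MeasurableSet {q : Eu n × Eu n | 2⁻¹ < |u q.1 - u q.2|} :=
    (((hu.comp measurable_fst).sub (hu.comp measurable_snd)).abs) (measurableSet_Ioi (a := 2⁻¹))
  exact Measurable.ite hS (meas_ker_pair n) measurable_const

theorem meas_md (n : ℕ) : Measurable (fun q : Eu n × Eu n => md q.1 q.2) := by
  unfold md
  exact (measurable_fst.add measurable_snd : Measurable (fun q : Eu n × Eu n => q.1 + q.2)).const_smul (2:ℝ)⁻¹

theorem dist_md_left {n : ℕ} (x y : Eu n) : dist x (md x y) = 2⁻¹ * dist x y := by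
  unfold md
  rw [dist_eq_norm, dist_eq_norm]
  have : x - (2:ℝ)⁻¹ • (x + y) = (2:ℝ)⁻¹ • (x - y) := by module
  rw [this, norm_smul]
  norm_num

theorem dist_md_right {n : ℕ} (x y : Eu n) : dist (md x y) y = 2⁻¹ * dist x y := by
  unfold md
  rw [dist_eq_norm, dist_eq_norm]
  have : (2:ℝ)⁻¹ • (x + y) - y = (2:ℝ)⁻¹ • (x - y) := by module
  rw [this, norm_smul]
  norm_num

theorem md_mem_ball {n : ℕ} {z x y : Eu n} {r : ℝ} (hx : x ∈ Metric.ball z r)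
    (hy : y ∈ Metric.ball z r) : md x y ∈ Metric.ball z r := by
  have := (convex_ball z r) hx hy (by norm_num : (0:ℝ) ≤ 2⁻¹) (by norm_num : (0:ℝ) ≤ 2⁻¹)
    (by norm_num : (2:ℝ)⁻¹ + 2⁻¹ = 1)
  unfold md
  rw [smul_add]
  exact this

theorem ofReal_tri (a b c : ℝ) (h : a ≤ b + c) :
    ENNReal.ofReal (a - 2) ≤ ENNReal.ofReal (b - 1) + ENNReal.ofReal (c - 1) := by
  refine le_trans (ENNReal.ofReal_le_ofReal (by linarith : a - 2 ≤ (b-1) + (c-1))) ?_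
  exact ENNReal.ofReal_add_le

/-- pointwise chain inequality -/
theorem ptwise_chain (n : ℕ) (z : Eu n) (r : ℝ) (hr : 0 < r) (v : Eu n → ℝ) (j : ℕ)
    (x y : Eu n) :
    pI n z r (sc r (j+1)) (sc r j) x y * ENNReal.ofReal (|v x - v y| - 2)
      ≤ pI n z r (sc r (j+2)) (sc r (j+1)) x (md x y)
          * ENNReal.ofReal (|v x - v (md x y)| - 1)
        + pI n z r (sc r (j+2)) (sc r (j+1)) (md x y) y
          * ENNReal.ofReal (|v (md x y) - v y| - 1) := by
  unfold pI
  by_cases hc : (x ∈ Metric.ball z r ∧ y ∈ Metric.ball z r ∧ sc r (j+1) < dist x y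
      ∧ dist x y ≤ sc r j)
  · obtain ⟨hx, hy, hlt, hle⟩ := hc
    have c1 : x ∈ Metric.ball z r ∧ md x y ∈ Metric.ball z r
        ∧ sc r (j+2) < dist x (md x y) ∧ dist x (md x y) ≤ sc r (j+1) := by
      refine ⟨hx, md_mem_ball hx hy, ?_, ?_⟩
      · rw [dist_md_left, sc_succ r (j+1)]
        exact mul_lt_mul_of_pos_left hlt (by norm_num)
      · rw [dist_md_left, sc_succ r j]
        exact mul_le_mul_of_nonneg_left hle (by norm_num)
    have c2 : md x y ∈ Metric.ball z r ∧ y ∈ Metric.ball z r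
        ∧ sc r (j+2) < dist (md x y) y ∧ dist (md x y) y ≤ sc r (j+1) := by
      refine ⟨md_mem_ball hx hy, hy, ?_, ?_⟩
      · rw [dist_md_right, sc_succ r (j+1)]
        exact mul_lt_mul_of_pos_left hlt (by norm_num)
      · rw [dist_md_right, sc_succ r j]
        exact mul_le_mul_of_nonneg_left hle (by norm_num)
    rw [if_pos ⟨hx, hy, hlt, hle⟩, if_pos c1, if_pos c2, one_mul, one_mul, one_mul]
    exact ofReal_tri _ _ _ (abs_sub_le _ _ _)
  · rw [if_neg hc, zero_mul]
    exact zero_le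

/-- pointwise splitting inequality -/
theorem ptwise_split (n : ℕ) (z : Eu n) (r : ℝ) (hr : 0 < r) (u v : Eu n → ℝ)
    (hle : ∀ x y, |v x - v y| ≤ |u x - u y|) (j : ℕ) (x y : Eu n) :
    pI n z r (sc r (j+1)) (sc r j) x y * ENNReal.ofReal (|v x - v y| - 1)
      ≤ ENNReal.ofReal ((sc r j)^(n+1))
          * (pI n z r (sc r (j+1)) (sc r j) x y * kerI n u x y)
        + pI n z r (sc r (j+1)) (sc r j) x y * ENNReal.ofReal (|v x - v y| - 2) := by
  unfold pI
  split_ifs with hc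
  · obtain ⟨hx, hy, hlt, hle'⟩ := hc
    simp only [one_mul]
    rcases le_total (|v x - v y|) 1 with hd | hd
    · rw [ENNReal.ofReal_eq_zero.2 (by linarith)]
      exact zero_le
    · have hdu : (2:ℝ)⁻¹ < |u x - u y| := lt_of_lt_of_le (by norm_num) (le_trans hd (hle x y))
      have hker : kerI n u x y = ker n x y := by unfold kerI; rw [if_pos hdu]
      have hdist : (0:ℝ) < ‖x - y‖ := by
        rw [← dist_eq_norm]; exact lt_trans (sc_pos r hr (j+1)) hlt
      have hscj : (0:ℝ) < sc r j := sc_pos r hr j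
      have hone : (1:ℝ≥0∞) ≤ ENNReal.ofReal ((sc r j)^(n+1)) * ker n x y := by
        unfold ker
        rw [← ENNReal.ofReal_mul (pow_pos hscj (n+1)).le]
        rw [show (1:ℝ≥0∞) = ENNReal.ofReal 1 by simp]
        apply ENNReal.ofReal_le_ofReal
        rw [← mul_pow]
        apply one_le_pow₀
        have hxy : ‖x - y‖ ≤ sc r j := by rw [← dist_eq_norm]; exact hle'
        calc (1:ℝ) = ‖x - y‖ * ‖x - y‖⁻¹ := (mul_inv_cancel₀ hdist.ne').symm
          _ ≤ sc r j * ‖x - y‖⁻¹ :=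
              mul_le_mul_of_nonneg_right hxy (inv_nonneg.2 hdist.le)
      rw [hker]
      rcases le_total (|v x - v y|) 2 with hd2 | hd2
      · refine le_trans (le_trans (ENNReal.ofReal_le_ofReal (by linarith : |v x - v y| - 1 ≤ 1))
          (by simp)) (le_trans hone (le_add_right (le_refl _)))
      · calc ENNReal.ofReal (|v x - v y| - 1)
            = ENNReal.ofReal (1 + (|v x - v y| - 2)) := by congr 1; ring
          _ ≤ ENNReal.ofReal 1 + ENNReal.ofReal (|v x - v y| - 2) := ENNReal.ofReal_add_le
          _ ≤ ENNReal.ofReal ((sc r j)^(n+1)) * ker n x y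
              + ENNReal.ofReal (|v x - v y| - 2) := by
              refine add_le_add (le_trans (by simp) hone) (le_refl _)
  · simp


theorem lint2_add {n : ℕ} (f g : Eu n → Eu n → ℝ≥0∞)
    (hf : Measurable (fun q : Eu n × Eu n => f q.1 q.2)) :
    ∫⁻ x, ∫⁻ y, (f x y + g x y) ∂volume ∂volume
      = (∫⁻ x, ∫⁻ y, f x y ∂volume ∂volume) + ∫⁻ x, ∫⁻ y, g x y ∂volume ∂volume := by
  have h2 : ∀ x, ∫⁻ y, (f x y + g x y) ∂volume
      = (∫⁻ y, f x y ∂volume) + ∫⁻ y, g x y ∂volume := by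
    intro x
    exact lintegral_add_left (hf.comp measurable_prodMk_left) _
  rw [lintegral_congr h2]
  exact lintegral_add_left hf.lintegral_prod_right' _

theorem lint2_cmul {n : ℕ} (c : ℝ≥0∞) (hc : c ≠ ⊤) (f : Eu n → Eu n → ℝ≥0∞) :
    ∫⁻ x, ∫⁻ y, c * f x y ∂volume ∂volume
      = c * ∫⁻ x, ∫⁻ y, f x y ∂volume ∂volume := by
  have h2 : ∀ x, ∫⁻ y, c * f x y ∂volume = c * ∫⁻ y, f x y ∂volume := by
    intro x
    exact lintegral_const_mul' _ _ hc
  rw [lintegral_congr h2]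
  exact lintegral_const_mul' _ _ hc

theorem lint2_md_left {n : ℕ} (F : Eu n → Eu n → ℝ≥0∞)
    (hF : Measurable (fun q : Eu n × Eu n => F q.1 q.2)) :
    ∫⁻ x, ∫⁻ y, F x (md x y) ∂volume ∂volume
      = 2^n * ∫⁻ x, ∫⁻ y, F x y ∂volume ∂volume := by
  have h1 : ∀ x, ∫⁻ y, F x (md x y) ∂volume = 2^n * ∫⁻ w, F x w ∂volume := by
    intro x
    exact lint_half_smul n (F x) (hF.comp measurable_prodMk_left) x
  rw [lintegral_congr h1]
  exact lintegral_const_mul' _ _ (by simp)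

theorem lint2_md_right {n : ℕ} (F : Eu n → Eu n → ℝ≥0∞)
    (hF : Measurable (fun q : Eu n × Eu n => F q.1 q.2)) :
    ∫⁻ x, ∫⁻ y, F (md x y) y ∂volume ∂volume
      = 2^n * ∫⁻ x, ∫⁻ y, F x y ∂volume ∂volume := by
  have hmd2 : Measurable (fun q : Eu n × Eu n => (md q.1 q.2, q.2)) :=
    (meas_md n).prodMk measurable_snd
  have hun : Measurable (Function.uncurry fun x y : Eu n => F (md x y) y) := hF.comp hmd2
  rw [lintegral_lintegral_swap hun.aemeasurable]
  have h1 : ∀ y : Eu n, ∫⁻ x, F (md x y) y ∂volume = 2^n * ∫⁻ w, F w y ∂volume := by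
    intro y
    have hre : ∀ x : Eu n, md x y = (2:ℝ)⁻¹ • (y + x) := by
      intro x; unfold md; rw [add_comm]
    simp_rw [hre]
    exact lint_half_smul n (fun w => F w y) (hF.comp measurable_prodMk_right) y
  rw [lintegral_congr h1, lintegral_const_mul' _ _ (by simp)]
  congr 1
  have hun2 : Measurable (Function.uncurry F) := hF
  exact (lintegral_lintegral_swap hun2.aemeasurable).symm

set_option maxHeartbeats 1000000 in
theorem rec_step (n : ℕ) (z : Eu n) (r : ℝ) (hr : 0 < r) (u v : Eu n → ℝ)
    (hu : Measurable u) (hv : Measurable v) (hle : ∀ x y, |v x - v y| ≤ |u x - u y|) (j : ℕ) :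
    gg n z r v j ≤ ENNReal.ofReal ((sc r j)^(n+1)) * ga n z r u j
      + 2^(n+1) * gg n z r v (j+1) := by
  classical
  have hcne : ENNReal.ofReal ((sc r j)^(n+1)) ≠ ⊤ := ENNReal.ofReal_ne_top
  have hApair : Measurable (fun q : Eu n × Eu n =>
      pI n z r (sc r (j+1)) (sc r j) q.1 q.2) := meas_pI_pair n z r _ _
  have hA'pair : Measurable (fun q : Eu n × Eu n =>
      pI n z r (sc r (j+2)) (sc r (j+1)) q.1 q.2) := meas_pI_pair n z r _ _
  have hF1pair : Measurable (fun q : Eu n × Eu n =>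
      ENNReal.ofReal (|v q.1 - v q.2| - 1)) := meas_dsub_pair v hv 1
  have hKpair : Measurable (fun q : Eu n × Eu n => kerI n u q.1 q.2) := meas_kerI_pair u hu
  have step1 : gg n z r v j ≤ ENNReal.ofReal ((sc r j)^(n+1)) * ga n z r u j
      + ∫⁻ x, ∫⁻ y, pI n z r (sc r (j+1)) (sc r j) x y
          * ENNReal.ofReal (|v x - v y| - 2) ∂volume ∂volume := by
    have h1 : gg n z r v j ≤ ∫⁻ x, ∫⁻ y,
        (ENNReal.ofReal ((sc r j)^(n+1))
            * (pI n z r (sc r (j+1)) (sc r j) x y * kerI n u x y)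
          + pI n z r (sc r (j+1)) (sc r j) x y * ENNReal.ofReal (|v x - v y| - 2))
          ∂volume ∂volume := by
      refine lintegral_mono fun x => lintegral_mono fun y => ?_
      exact ptwise_split n z r hr u v hle j x y
    refine le_trans h1 (le_of_eq ?_)
    rw [lint2_add (fun x y => ENNReal.ofReal ((sc r j)^(n+1))
        * (pI n z r (sc r (j+1)) (sc r j) x y * kerI n u x y))
      (fun x y => pI n z r (sc r (j+1)) (sc r j) x y * ENNReal.ofReal (|v x - v y| - 2))
      (measurable_const.mul (hApair.mul hKpair))]
    rw [lint2_cmul _ hcne (fun x y => pI n z r (sc r (j+1)) (sc r j) x y * kerI n u x y)]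
    rfl
  have step2 : ∫⁻ x, ∫⁻ y, pI n z r (sc r (j+1)) (sc r j) x y
      * ENNReal.ofReal (|v x - v y| - 2) ∂volume ∂volume
      ≤ 2^(n+1) * gg n z r v (j+1) := by
    have h1 : ∫⁻ x, ∫⁻ y, pI n z r (sc r (j+1)) (sc r j) x y
        * ENNReal.ofReal (|v x - v y| - 2) ∂volume ∂volume
        ≤ ∫⁻ x, ∫⁻ y,
          ((fun a b => pI n z r (sc r (j+2)) (sc r (j+1)) a b
              * ENNReal.ofReal (|v a - v b| - 1)) x (md x y)
            + (fun a b => pI n z r (sc r (j+2)) (sc r (j+1)) a b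
              * ENNReal.ofReal (|v a - v b| - 1)) (md x y) y) ∂volume ∂volume := by
      refine lintegral_mono fun x => lintegral_mono fun y => ?_
      exact ptwise_chain n z r hr v j x y
    refine le_trans h1 (le_of_eq ?_)
    rw [lint2_add
      (fun x y => (fun a b => pI n z r (sc r (j+2)) (sc r (j+1)) a b
          * ENNReal.ofReal (|v a - v b| - 1)) x (md x y))
      (fun x y => (fun a b => pI n z r (sc r (j+2)) (sc r (j+1)) a b
          * ENNReal.ofReal (|v a - v b| - 1)) (md x y) y)
      ((hA'pair.mul hF1pair).comp (measurable_fst.prodMk (meas_md n)))]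
    rw [lint2_md_left (fun a b => pI n z r (sc r (j+2)) (sc r (j+1)) a b
        * ENNReal.ofReal (|v a - v b| - 1)) (hA'pair.mul hF1pair)]
    rw [lint2_md_right (fun a b => pI n z r (sc r (j+2)) (sc r (j+1)) a b
        * ENNReal.ofReal (|v a - v b| - 1)) (hA'pair.mul hF1pair)]
    rw [← two_mul, ← mul_assoc, ← pow_succ']
    rfl
  exact le_trans step1 (add_le_add (le_refl _) step2)


theorem sc_le_sc (r : ℝ) (hr : 0 < r) {a b : ℕ} (h : a ≤ b) : sc r b ≤ sc r a := by
  unfold sc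
  have := pow_le_pow_of_le_one (by norm_num : (0:ℝ) ≤ 2⁻¹) (by norm_num : (2:ℝ)⁻¹ ≤ 1) h
  nlinarith

theorem sc_pow_shift (n : ℕ) (r : ℝ) (hr : 0 < r) (j k : ℕ) :
    (2:ℝ≥0∞)^((n+1)*k) * ENNReal.ofReal ((sc r (j+k))^(n+1))
      = ENNReal.ofReal ((sc r j)^(n+1)) := by
  have h1 : sc r (j+k) = sc r j * ((2:ℝ)⁻¹)^k := by unfold sc; rw [pow_add]; ring
  have h2 : (sc r (j+k))^(n+1) = (sc r j)^(n+1) * (((2:ℝ)⁻¹)^((n+1)*k)) := by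
    rw [h1, mul_pow, ← pow_mul, mul_comm k (n+1)]
  rw [h2, ENNReal.ofReal_mul' (by positivity), ← mul_assoc,
    mul_comm ((2:ℝ≥0∞)^((n+1)*k)) _, mul_assoc]
  have h3 : ENNReal.ofReal (((2:ℝ)⁻¹)^((n+1)*k)) = ((2:ℝ≥0∞)⁻¹)^((n+1)*k) := by
    rw [ENNReal.ofReal_pow (by norm_num)]
    congr 1
    rw [ENNReal.ofReal_inv_of_pos (by norm_num), ENNReal.ofReal_ofNat]
  rw [h3, ← mul_pow, ENNReal.mul_inv_cancel (by norm_num) (by norm_num), one_pow, mul_one]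

/-- pointwise bounded-function estimate -/
theorem ptwise_bdd (n : ℕ) (z : Eu n) (r : ℝ) (hr : 0 < r) (u v : Eu n → ℝ)
    (hle : ∀ x y, |v x - v y| ≤ |u x - u y|) (Mb : ℝ) (hMb : ∀ x, |v x| ≤ Mb)
    (j : ℕ) (x y : Eu n) :
    pI n z r (sc r (j+1)) (sc r j) x y * ENNReal.ofReal (|v x - v y| - 1)
      ≤ ENNReal.ofReal (2*Mb)
          * (ENNReal.ofReal ((sc r j)^(n+1))
            * (pI n z r (sc r (j+1)) (sc r j) x y * kerI n u x y)) := by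
  unfold pI
  split_ifs with hc
  · obtain ⟨hx, hy, hlt, hle'⟩ := hc
    simp only [one_mul]
    rcases le_total (|v x - v y|) 1 with hd | hd
    · rw [ENNReal.ofReal_eq_zero.2 (by linarith)]
      exact zero_le
    · have hdu : (2:ℝ)⁻¹ < |u x - u y| := lt_of_lt_of_le (by norm_num) (le_trans hd (hle x y))
      have hker : kerI n u x y = ker n x y := by unfold kerI; rw [if_pos hdu]
      have hdist : (0:ℝ) < ‖x - y‖ := by
        rw [← dist_eq_norm]; exact lt_trans (sc_pos r hr (j+1)) hlt
      have hscj : (0:ℝ) < sc r j := sc_pos r hr j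
      have hone : (1:ℝ≥0∞) ≤ ENNReal.ofReal ((sc r j)^(n+1)) * ker n x y := by
        unfold ker
        rw [← ENNReal.ofReal_mul (pow_pos hscj (n+1)).le]
        rw [show (1:ℝ≥0∞) = ENNReal.ofReal 1 by simp]
        apply ENNReal.ofReal_le_ofReal
        rw [← mul_pow]
        apply one_le_pow₀
        have hxy : ‖x - y‖ ≤ sc r j := by rw [← dist_eq_norm]; exact hle'
        calc (1:ℝ) = ‖x - y‖ * ‖x - y‖⁻¹ := (mul_inv_cancel₀ hdist.ne').symm
          _ ≤ sc r j * ‖x - y‖⁻¹ :=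
              mul_le_mul_of_nonneg_right hxy (inv_nonneg.2 hdist.le)
      rw [hker]
      calc ENNReal.ofReal (|v x - v y| - 1)
          ≤ ENNReal.ofReal (2*Mb) := by
            apply ENNReal.ofReal_le_ofReal
            have h1 := hMb x
            have h2 := hMb y
            have := abs_sub (v x) (v y)
            linarith
        _ = ENNReal.ofReal (2*Mb) * 1 := (mul_one _).symm
        _ ≤ _ := mul_le_mul_right hone _
  · simp

theorem gg_le_budget (n : ℕ) (z : Eu n) (r : ℝ) (hr : 0 < r) (u v : Eu n → ℝ)
    (hu : Measurable u) (hv : Measurable v)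
    (hle : ∀ x y, |v x - v y| ≤ |u x - u y|) (Mb : ℝ) (hMb : ∀ x, |v x| ≤ Mb) (j : ℕ) :
    gg n z r v j ≤ ENNReal.ofReal (2*Mb)
      * (ENNReal.ofReal ((sc r j)^(n+1)) * ga n z r u j) := by
  have h1 : gg n z r v j ≤ ∫⁻ x, ∫⁻ y, ENNReal.ofReal (2*Mb)
      * (ENNReal.ofReal ((sc r j)^(n+1))
        * (pI n z r (sc r (j+1)) (sc r j) x y * kerI n u x y)) ∂volume ∂volume := by
    refine lintegral_mono fun x => lintegral_mono fun y => ?_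
    exact ptwise_bdd n z r hr u v hle Mb hMb j x y
  refine le_trans h1 (le_of_eq ?_)
  rw [lint2_cmul _ ENNReal.ofReal_ne_top]
  congr 1
  rw [lint2_cmul _ ENNReal.ofReal_ne_top]
  rfl

theorem unroll (n : ℕ) (z : Eu n) (r : ℝ) (hr : 0 < r) (u v : Eu n → ℝ)
    (hu : Measurable u) (hv : Measurable v)
    (hle : ∀ x y, |v x - v y| ≤ |u x - u y|) (j : ℕ) : ∀ k : ℕ,
    gg n z r v j ≤ ENNReal.ofReal ((sc r j)^(n+1))
        * (∑ l ∈ Finset.range k, ga n z r u (j+l))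
      + 2^((n+1)*k) * gg n z r v (j+k) := by
  intro k
  induction k with
  | zero => simp
  | succ k ih =>
    refine le_trans ih ?_
    have h1 := rec_step n z r hr u v hu hv hle (j+k)
    calc ENNReal.ofReal ((sc r j)^(n+1)) * (∑ l ∈ Finset.range k, ga n z r u (j+l))
          + 2^((n+1)*k) * gg n z r v (j+k)
        ≤ ENNReal.ofReal ((sc r j)^(n+1)) * (∑ l ∈ Finset.range k, ga n z r u (j+l))
          + 2^((n+1)*k) * (ENNReal.ofReal ((sc r (j+k))^(n+1)) * ga n z r u (j+k)
            + 2^(n+1) * gg n z r v (j+k+1)) := by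
          exact add_le_add (le_refl _) (mul_le_mul_right h1 _)
      _ = ENNReal.ofReal ((sc r j)^(n+1)) * (∑ l ∈ Finset.range k, ga n z r u (j+l))
          + (2^((n+1)*k) * ENNReal.ofReal ((sc r (j+k))^(n+1))) * ga n z r u (j+k)
          + 2^((n+1)*(k+1)) * gg n z r v (j+(k+1)) := by
          have hexp : (2:ℝ≥0∞)^((n+1)*(k+1)) = 2^((n+1)*k) * 2^(n+1) := by
            rw [← pow_add, mul_add, mul_one]
          have hjk : j + (k+1) = j + k + 1 := by omega
          rw [hexp, hjk]; ring
      _ = ENNReal.ofReal ((sc r j)^(n+1)) * (∑ l ∈ Finset.range (k+1), ga n z r u (j+l))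
          + 2^((n+1)*(k+1)) * gg n z r v (j+(k+1)) := by
          rw [sc_pow_shift n r hr j k, Finset.sum_range_succ]
          ring

theorem gg_le_final (n : ℕ) (z : Eu n) (r : ℝ) (hr : 0 < r) (u v : Eu n → ℝ)
    (hu : Measurable u) (hv : Measurable v)
    (hle : ∀ x y, |v x - v y| ≤ |u x - u y|) (Mb : ℝ) (hMb : ∀ x, |v x| ≤ Mb)
    (hsum : (∑' l, ga n z r u l) ≠ ⊤) (j : ℕ) :
    gg n z r v j ≤ ENNReal.ofReal ((sc r j)^(n+1)) * ∑' l, ga n z r u l := by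
  have key : ∀ k : ℕ, gg n z r v j ≤ ENNReal.ofReal ((sc r j)^(n+1)) * (∑' l, ga n z r u l)
      + (ENNReal.ofReal (2*Mb) * ENNReal.ofReal ((sc r j)^(n+1))) * ga n z r u (j+k) := by
    intro k
    refine le_trans (unroll n z r hr u v hu hv hle j k) (add_le_add ?_ ?_)
    · refine mul_le_mul_right ?_ _
      refine le_trans (ENNReal.sum_le_tsum _) ?_
      exact ENNReal.tsum_comp_le_tsum_of_injective (add_right_injective j) _
    · calc 2^((n+1)*k) * gg n z r v (j+k)
          ≤ 2^((n+1)*k) * (ENNReal.ofReal (2*Mb)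
            * (ENNReal.ofReal ((sc r (j+k))^(n+1)) * ga n z r u (j+k))) :=
            mul_le_mul_right (gg_le_budget n z r hr u v hu hv hle Mb hMb (j+k)) _
        _ = (ENNReal.ofReal (2*Mb) * ENNReal.ofReal ((sc r j)^(n+1))) * ga n z r u (j+k) := by
            rw [← sc_pow_shift n r hr j k]
            ring
  have htend : Tendsto (fun k => ga n z r u (j+k)) atTop (𝓝 0) := by
    have h1 := ENNReal.tendsto_atTop_zero_of_tsum_ne_top hsum
    have h3 : Tendsto (fun k : ℕ => ga n z r u (k + j)) atTop (𝓝 0) :=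
      h1.comp (tendsto_add_atTop_nat j)
    simpa [add_comm] using h3
  have hlim : Tendsto (fun k => ENNReal.ofReal ((sc r j)^(n+1)) * (∑' l, ga n z r u l)
      + (ENNReal.ofReal (2*Mb) * ENNReal.ofReal ((sc r j)^(n+1))) * ga n z r u (j+k)) atTop
      (𝓝 (ENNReal.ofReal ((sc r j)^(n+1)) * (∑' l, ga n z r u l))) := by
    have h3 : Tendsto (fun k => (ENNReal.ofReal (2*Mb) * ENNReal.ofReal ((sc r j)^(n+1)))
        * ga n z r u (j+k)) atTop (𝓝 0) := by
      have := ENNReal.Tendsto.const_mul (a := ENNReal.ofReal (2*Mb)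
          * ENNReal.ofReal ((sc r j)^(n+1))) htend
        (Or.inr (ENNReal.mul_ne_top ENNReal.ofReal_ne_top ENNReal.ofReal_ne_top))
      simpa using this
    have := Tendsto.const_add (ENNReal.ofReal ((sc r j)^(n+1)) * (∑' l, ga n z r u l)) h3
    simpa using this
  exact ge_of_tendsto' hlim key


theorem cover_ptwise (n : ℕ) (z : Eu n) (r : ℝ) (hr : 0 < r) (v : Eu n → ℝ)
    (x y : Eu n) (hx : x ∈ Metric.ball z r) (hy : y ∈ Metric.ball z r) :
    ENNReal.ofReal (|v x - v y| - 1)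
      ≤ ∑' j, pI n z r (sc r (j+1)) (sc r j) x y * ENNReal.ofReal (|v x - v y| - 1) := by
  rcases le_or_gt (|v x - v y|) 1 with hd | hd
  · rw [ENNReal.ofReal_eq_zero.2 (by linarith)]
    exact zero_le
  · have hxy : x ≠ y := by
      intro h
      rw [h] at hd
      simp at hd
      linarith
    have hdpos : 0 < dist x y := dist_pos.2 hxy
    have hdlt : dist x y < 2*r := by
      have := dist_triangle_right x y z
      have h1 := mem_ball.1 hx
      have h2 := mem_ball.1 hy
      calc dist x y ≤ dist x z + dist y z := this
        _ < 2*r := by rw [mem_ball] at hx hy; linarith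
    have hex : ∃ m : ℕ, sc r m < dist x y := by
      obtain ⟨m, hm⟩ := exists_pow_lt_of_lt_one
        (div_pos hdpos (by linarith : (0:ℝ) < 2*r)) (by norm_num : (2:ℝ)⁻¹ < 1)
      refine ⟨m, ?_⟩
      unfold sc
      calc 2*r*((2:ℝ)⁻¹)^m < 2*r*(dist x y / (2*r)) :=
          mul_lt_mul_of_pos_left hm (by linarith)
        _ = dist x y := by field_simp
    classical
    let m₀ := Nat.find hex
    have hm₀ : sc r m₀ < dist x y := Nat.find_spec hex
    have hm₀ne : m₀ ≠ 0 := by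
      intro h
      have : sc r 0 < dist x y := h ▸ hm₀
      unfold sc at this
      simp at this
      linarith
    obtain ⟨j, hj⟩ : ∃ j, m₀ = j + 1 := ⟨m₀ - 1, by omega⟩
    have hjlt : sc r (j+1) < dist x y := hj ▸ hm₀
    have hjge : dist x y ≤ sc r j := by
      by_contra hcon
      push_neg at hcon
      have := Nat.find_min hex (by omega : j < m₀)
      exact this hcon
    have hone : pI n z r (sc r (j+1)) (sc r j) x y = 1 := by
      unfold pI
      rw [if_pos ⟨hx, hy, hjlt, hjge⟩]
    calc ENNReal.ofReal (|v x - v y| - 1)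
        = pI n z r (sc r (j+1)) (sc r j) x y * ENNReal.ofReal (|v x - v y| - 1) := by
          rw [hone, one_mul]
      _ ≤ _ := ENNReal.le_tsum j

theorem total_le (n : ℕ) (z : Eu n) (r : ℝ) (hr : 0 < r) (v : Eu n → ℝ)
    (hv : Measurable v) :
    ∫⁻ x in Metric.ball z r, ∫⁻ y in Metric.ball z r,
      ENNReal.ofReal (|v x - v y| - 1) ∂volume ∂volume
      ≤ ∑' j, gg n z r v j := by
  have hmb : MeasurableSet (Metric.ball z r) := measurableSet_ball
  have step1 : ∫⁻ x in Metric.ball z r, ∫⁻ y in Metric.ball z r,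
      ENNReal.ofReal (|v x - v y| - 1) ∂volume ∂volume
      ≤ ∫⁻ x, ∫⁻ y, ∑' j, pI n z r (sc r (j+1)) (sc r j) x y
          * ENNReal.ofReal (|v x - v y| - 1) ∂volume ∂volume := by
    refine le_trans (setLIntegral_mono' hmb ?_) (setLIntegral_le_lintegral _ _)
    intro x hx
    refine le_trans (setLIntegral_mono' hmb ?_) (setLIntegral_le_lintegral _ _)
    intro y hy
    exact cover_ptwise n z r hr v x y hx hy
  refine le_trans step1 (le_of_eq ?_)
  have hmeas : ∀ j : ℕ, Measurable (fun q : Eu n × Eu n =>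
      pI n z r (sc r (j+1)) (sc r j) q.1 q.2 * ENNReal.ofReal (|v q.1 - v q.2| - 1)) :=
    fun j => (meas_pI_pair n z r _ _).mul (meas_dsub_pair v hv 1)
  have h1 : ∀ x, ∫⁻ y, ∑' j, pI n z r (sc r (j+1)) (sc r j) x y
      * ENNReal.ofReal (|v x - v y| - 1) ∂volume
      = ∑' j, ∫⁻ y, pI n z r (sc r (j+1)) (sc r j) x y
          * ENNReal.ofReal (|v x - v y| - 1) ∂volume := by
    intro x
    exact lintegral_tsum fun j => ((hmeas j).comp measurable_prodMk_left).aemeasurable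
  rw [lintegral_congr h1]
  exact lintegral_tsum fun j => ((hmeas j).lintegral_prod_right').aemeasurable

open Classical in
def bW (n : ℕ) (z : Eu n) (r : ℝ) (u : Eu n → ℝ) : ℝ≥0∞ :=
  ∫⁻ x, ∫⁻ y, (if x ∈ Metric.ball z r ∧ y ∈ Metric.ball z r then kerI n u x y else 0)
    ∂volume ∂volume

theorem tsum_ga_le (n : ℕ) (z : Eu n) (r : ℝ) (hr : 0 < r) (u : Eu n → ℝ)
    (hu : Measurable u) :
    ∑' j, ga n z r u j ≤ bW n z r u := by
  classical
  have hmeas : ∀ j : ℕ, Measurable (fun q : Eu n × Eu n =>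
      pI n z r (sc r (j+1)) (sc r j) q.1 q.2 * kerI n u q.1 q.2) :=
    fun j => (meas_pI_pair n z r _ _).mul (meas_kerI_pair u hu)
  have h1 : ∑' j, ga n z r u j = ∫⁻ x, ∫⁻ y, ∑' j,
      pI n z r (sc r (j+1)) (sc r j) x y * kerI n u x y ∂volume ∂volume := by
    rw [show (fun x => ∫⁻ y, ∑' j, pI n z r (sc r (j+1)) (sc r j) x y
        * kerI n u x y ∂volume) = fun x => ∑' j, ∫⁻ y,
          pI n z r (sc r (j+1)) (sc r j) x y * kerI n u x y ∂volume from
      funext fun x => lintegral_tsum fun j =>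
        ((hmeas j).comp measurable_prodMk_left).aemeasurable]
    rw [lintegral_tsum fun j => ((hmeas j).lintegral_prod_right').aemeasurable]
    rfl
  rw [h1]
  unfold bW
  refine lintegral_mono fun x => lintegral_mono fun y => ?_
  -- pointwise : at most one annulus active
  by_cases hxy : x ∈ Metric.ball z r ∧ y ∈ Metric.ball z r
  · rw [if_pos hxy]
    by_cases hex : ∃ j : ℕ, sc r (j+1) < dist x y ∧ dist x y ≤ sc r j
    · obtain ⟨j₀, hj₀⟩ := hex
      have huniq : ∀ j : ℕ, j ≠ j₀ →
          pI n z r (sc r (j+1)) (sc r j) x y * kerI n u x y = 0 := by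
        intro j hne
        have : pI n z r (sc r (j+1)) (sc r j) x y = 0 := by
          unfold pI
          rw [if_neg]
          rintro ⟨-, -, hlt, hle⟩
          rcases lt_or_gt_of_ne hne with h | h
          · have : sc r j₀ ≤ sc r (j+1) := sc_le_sc r hr (by omega)
            linarith [hj₀.2, hj₀.1]
          · have : sc r j ≤ sc r (j₀+1) := sc_le_sc r hr (by omega)
            linarith [hj₀.2, hj₀.1]
        rw [this, zero_mul]
      rw [tsum_eq_single j₀ huniq]
      unfold pI
      rw [if_pos ⟨hxy.1, hxy.2, hj₀.1, hj₀.2⟩, one_mul]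
    · push_neg at hex
      have hall : ∀ j : ℕ, pI n z r (sc r (j+1)) (sc r j) x y * kerI n u x y = 0 := by
        intro j
        have : pI n z r (sc r (j+1)) (sc r j) x y = 0 := by
          unfold pI
          rw [if_neg]
          rintro ⟨-, -, hlt, hle⟩
          exact absurd hle (not_le.2 (hex j hlt))
        rw [this, zero_mul]
      rw [tsum_congr hall]
      simp
  · have hall : ∀ j : ℕ, pI n z r (sc r (j+1)) (sc r j) x y * kerI n u x y = 0 := by
      intro j
      have : pI n z r (sc r (j+1)) (sc r j) x y = 0 := by
        unfold pI
        rw [if_neg]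
        rintro ⟨h1', h2', -, -⟩
        exact hxy ⟨h1', h2'⟩
      rw [this, zero_mul]
    rw [if_neg hxy, tsum_congr hall]
    simp

theorem tsum_sc_le (n : ℕ) (r : ℝ) (hr : 0 < r) :
    ∑' j : ℕ, ENNReal.ofReal ((sc r j)^(n+1)) ≤ 2 * ENNReal.ofReal ((2*r)^(n+1)) := by
  have h1 : ∀ j : ℕ, ENNReal.ofReal ((sc r j)^(n+1))
      = ENNReal.ofReal ((2*r)^(n+1)) * (ENNReal.ofReal ((2:ℝ)⁻¹^(n+1)))^j := by
    intro j
    rw [← ENNReal.ofReal_pow (by positivity), ← ENNReal.ofReal_mul (by positivity)]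
    congr 1
    unfold sc
    rw [mul_pow, ← pow_mul, ← pow_mul, mul_comm j (n+1)]
  rw [tsum_congr h1, ENNReal.tsum_mul_left, ENNReal.tsum_geometric]
  rw [mul_comm]
  refine mul_le_mul_left ?_ _
  have hq' : ((2:ℝ)⁻¹)^(n+1) ≤ (2:ℝ)⁻¹ := by
    calc ((2:ℝ)⁻¹)^(n+1) ≤ ((2:ℝ)⁻¹)^1 :=
        pow_le_pow_of_le_one (by norm_num) (by norm_num) (by omega)
      _ = (2:ℝ)⁻¹ := pow_one _
  have hq : ENNReal.ofReal ((2:ℝ)⁻¹^(n+1)) ≤ 2⁻¹ := by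
    refine le_trans (ENNReal.ofReal_le_ofReal hq') ?_
    rw [ENNReal.ofReal_inv_of_pos (by norm_num), ENNReal.ofReal_ofNat]
  have h2 : (2:ℝ≥0∞)⁻¹ ≤ 1 - ENNReal.ofReal ((2:ℝ)⁻¹^(n+1)) := by
    have h3 : (1:ℝ≥0∞) - 2⁻¹ = 2⁻¹ := by
      rw [ENNReal.sub_eq_of_eq_add (by norm_num) ?_]
      rw [ENNReal.inv_two_add_inv_two]
    calc (2:ℝ≥0∞)⁻¹ = 1 - 2⁻¹ := h3.symm
      _ ≤ 1 - ENNReal.ofReal ((2:ℝ)⁻¹^(n+1)) := tsub_le_tsub_left hq 1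
  calc (1 - ENNReal.ofReal ((2:ℝ)⁻¹^(n+1)))⁻¹ ≤ ((2:ℝ≥0∞)⁻¹)⁻¹ :=
      ENNReal.inv_le_inv' h2
    _ = 2 := inv_inv 2


theorem tail_full (n : ℕ) (z : Eu n) (r : ℝ) (hr : 0 < r) (u : Eu n → ℝ)
    (hu : Measurable u) :
    ∫⁻ x in Metric.ball z r, ∫⁻ y in Metric.ball z r,
      ENNReal.ofReal (|u x - u y| - 1) ∂volume ∂volume
    ≤ 2 * ENNReal.ofReal ((2*r)^(n+1)) * bW n z r u := by
  by_cases hW : bW n z r u = ⊤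
  · rw [hW]
    rw [ENNReal.mul_top (by
      refine mul_ne_zero (by norm_num) ?_
      rw [ne_eq, ENNReal.ofReal_eq_zero, not_le]
      positivity)]
    exact le_top
  · have hsum : (∑' l, ga n z r u l) ≠ ⊤ :=
      ne_top_of_le_ne_top hW (tsum_ga_le n z r hr u hu)
    -- bound for each truncation level
    have hM : ∀ M : ℕ, ∫⁻ x in Metric.ball z r, ∫⁻ y in Metric.ball z r,
        ENNReal.ofReal (|clamp M (u x) - clamp M (u y)| - 1) ∂volume ∂volume
        ≤ 2 * ENNReal.ofReal ((2*r)^(n+1)) * bW n z r u := by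
      intro M
      have hv : Measurable (fun x => clamp M (u x)) := meas_clamp M hu
      have hle : ∀ x y, |clamp M (u x) - clamp M (u y)| ≤ |u x - u y| :=
        fun x y => clamp_lip M (u x) (u y)
      have hMb : ∀ x, |clamp M (u x)| ≤ (M:ℝ) := fun x => clamp_abs_le M (u x)
      calc ∫⁻ x in Metric.ball z r, ∫⁻ y in Metric.ball z r,
          ENNReal.ofReal (|clamp M (u x) - clamp M (u y)| - 1) ∂volume ∂volume
          ≤ ∑' j, gg n z r (fun x => clamp M (u x)) j := total_le n z r hr _ hv
        _ ≤ ∑' j, ENNReal.ofReal ((sc r j)^(n+1)) * ∑' l, ga n z r u l := by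
            refine ENNReal.tsum_le_tsum fun j => ?_
            exact gg_le_final n z r hr u _ hu hv hle (M:ℝ) hMb hsum j
        _ = (∑' j, ENNReal.ofReal ((sc r j)^(n+1))) * ∑' l, ga n z r u l :=
            ENNReal.tsum_mul_right
        _ ≤ (2 * ENNReal.ofReal ((2*r)^(n+1))) * ∑' l, ga n z r u l :=
            mul_le_mul_left (tsum_sc_le n r hr) _
        _ ≤ 2 * ENNReal.ofReal ((2*r)^(n+1)) * bW n z r u :=
            mul_le_mul_right (tsum_ga_le n z r hr u hu) _
    -- monotone convergence
    have hsup : ∀ a b : ℝ, (⨆ M : ℕ, ENNReal.ofReal (|clamp M a - clamp M b| - 1))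
        = ENNReal.ofReal (|a - b| - 1) := by
      intro a b
      apply le_antisymm
      · exact iSup_le fun M => ENNReal.ofReal_le_ofReal (by linarith [clamp_lip M a b])
      · set M := Nat.ceil (max |a| |b|) with hMdef
        have ha : |a| ≤ (M:ℝ) := le_trans (le_max_left _ _) (Nat.le_ceil _)
        have hb : |b| ≤ (M:ℝ) := le_trans (le_max_right _ _) (Nat.le_ceil _)
        refine le_iSup_of_le M (le_of_eq ?_)
        rw [clamp_eq M a ha, clamp_eq M b hb]
    have hmono : ∀ x y : Eu n, Monotone (fun M : ℕ =>
        ENNReal.ofReal (|clamp M (u x) - clamp M (u y)| - 1)) := by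
      intro x y M M' h
      exact ENNReal.ofReal_le_ofReal (by linarith [clamp_mono_pair M M' h (u x) (u y)])
    have hinner : ∀ x : Eu n, ∫⁻ y in Metric.ball z r,
        ENNReal.ofReal (|u x - u y| - 1) ∂volume
        = ⨆ M : ℕ, ∫⁻ y in Metric.ball z r,
            ENNReal.ofReal (|clamp M (u x) - clamp M (u y)| - 1) ∂volume := by
      intro x
      have hLS := lintegral_iSup (μ := volume.restrict (Metric.ball z r))
        (f := fun (M : ℕ) (y : Eu n) => ENNReal.ofReal (|clamp M (u x) - clamp M (u y)| - 1))
        (fun M => ENNReal.measurable_ofReal.comp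
          ((measurable_const.sub (meas_clamp M hu)).abs.sub measurable_const))
        (fun M M' h => fun y => hmono x y h)
      calc ∫⁻ y in Metric.ball z r, ENNReal.ofReal (|u x - u y| - 1) ∂volume
          = ∫⁻ y in Metric.ball z r,
              ⨆ M : ℕ, ENNReal.ofReal (|clamp M (u x) - clamp M (u y)| - 1) ∂volume :=
            lintegral_congr fun y => (hsup (u x) (u y)).symm
        _ = ⨆ M : ℕ, ∫⁻ y in Metric.ball z r,
              ENNReal.ofReal (|clamp M (u x) - clamp M (u y)| - 1) ∂volume := hLS
    calc ∫⁻ x in Metric.ball z r, ∫⁻ y in Metric.ball z r,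
        ENNReal.ofReal (|u x - u y| - 1) ∂volume ∂volume
        = ∫⁻ x in Metric.ball z r, ⨆ M : ℕ, ∫⁻ y in Metric.ball z r,
            ENNReal.ofReal (|clamp M (u x) - clamp M (u y)| - 1) ∂volume ∂volume :=
          lintegral_congr hinner
      _ = ⨆ M : ℕ, ∫⁻ x in Metric.ball z r, ∫⁻ y in Metric.ball z r,
            ENNReal.ofReal (|clamp M (u x) - clamp M (u y)| - 1) ∂volume ∂volume := by
          refine lintegral_iSup (fun M => ?_) (fun M M' h => fun x => ?_)
          · exact (ENNReal.measurable_ofReal.comp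
              ((((meas_clamp M hu).comp measurable_fst).sub
                ((meas_clamp M hu).comp measurable_snd)).abs.sub
                measurable_const)).lintegral_prod_right'
          · exact lintegral_mono fun y => hmono x y h
      _ ≤ 2 * ENNReal.ofReal ((2*r)^(n+1)) * bW n z r u := iSup_le hM


theorem bW_le (n : ℕ) (z : Eu n) (r : ℝ) (hr : 0 < r) (u : Eu n → ℝ) (hu : Measurable u)
    (p : Eu n → ℝ) (hp : ∀ x ∈ Metric.ball z r, p x = 1) :
    ENNReal.ofReal 2⁻¹ * bW n z r u
      ≤ ∫⁻ x, ∫⁻ y in {y | 2⁻¹ < |u x - u y|},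
          ENNReal.ofReal ((2⁻¹:ℝ) ^ p x / ‖x - y‖ ^ ((n : ℝ) + p x)) ∂volume ∂volume := by
  classical
  unfold bW
  rw [← lint2_cmul (ENNReal.ofReal 2⁻¹) ENNReal.ofReal_ne_top
    (fun x y => if x ∈ Metric.ball z r ∧ y ∈ Metric.ball z r then kerI n u x y else 0)]
  refine lintegral_mono fun x => ?_
  have hS : MeasurableSet {y : Eu n | 2⁻¹ < |u x - u y|} :=
    ((measurable_const.sub hu).abs) (measurableSet_Ioi (a := 2⁻¹))
  rw [← lintegral_indicator hS]
  refine lintegral_mono fun y => ?_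
  by_cases hxy : x ∈ Metric.ball z r ∧ y ∈ Metric.ball z r
  · rw [if_pos hxy]
    by_cases hd : (2:ℝ)⁻¹ < |u x - u y|
    · have hmem : y ∈ {y : Eu n | 2⁻¹ < |u x - u y|} := hd
      rw [Set.indicator_of_mem hmem]
      unfold kerI
      rw [if_pos hd]
      unfold ker
      rw [← ENNReal.ofReal_mul (by norm_num)]
      apply ENNReal.ofReal_le_ofReal
      rw [hp x hxy.1]
      rw [Real.rpow_one]
      have hcast : ((n:ℝ) + 1) = ((n+1 : ℕ) : ℝ) := by push_cast; ring
      rw [hcast, Real.rpow_natCast]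
      rw [div_eq_mul_inv, inv_pow]
    · unfold kerI
      rw [if_neg hd, mul_zero]
      exact zero_le
  · rw [if_neg hxy, mul_zero]
    exact zero_le


theorem ptsmall (a : ℝ) : ENNReal.ofReal a ≤ 1 + ENNReal.ofReal (a - 1) := by
  rcases le_total a 1 with h | h
  · calc ENNReal.ofReal a ≤ ENNReal.ofReal 1 := ENNReal.ofReal_le_ofReal h
      _ = 1 := by simp
      _ ≤ 1 + ENNReal.ofReal (a-1) := le_self_add
  · calc ENNReal.ofReal a = ENNReal.ofReal (1 + (a-1)) := by congr 1; ring
      _ = ENNReal.ofReal 1 + ENNReal.ofReal (a-1) := ENNReal.ofReal_add (by norm_num) (by linarith)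
      _ = 1 + ENNReal.ofReal (a-1) := by simp
      _ ≤ 1 + ENNReal.ofReal (a-1) := le_refl _

end BN17

open BN17

/-- Remark 4.6 (limiting case `p⁻ = 1`): a uniform bound on the Nguyen-type quantities
yields a BMO-type bound on balls contained in the interior of `{p = 1}`. -/
theorem stmt17 (n : ℕ) (hn : 1 ≤ n) (p : Eu n → ℝ) (hpmeas : Measurable p)
    (hp1 : ∀ x, 1 ≤ p x) (hbdd : ∃ M : ℝ, ∀ x, p x ≤ M)
    (hpm : essInf p volume = 1) (pp : ℝ) (hpp : pp = essSup p volume)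
    (u : Eu n → ℝ) (humeas : Measurable u)
    (huLp : (∫⁻ x, (‖u x‖₊ : ℝ≥0∞) ^ p x ∂volume) < ⊤)
    (hE : (interior {x | p x = 1}).Nonempty)
    (hLam : (⨆ δ ∈ Set.Ioo (0:ℝ) 1,
        ∫⁻ x, ∫⁻ y in {y | δ < |u x - u y|},
          ENNReal.ofReal (δ ^ p x / ‖x - y‖ ^ ((n : ℝ) + p x)) ∂volume ∂volume) < ⊤) :
    ∃ C : ℝ≥0∞, C < ⊤ ∧
      ∀ (z : Eu n) (r : ℝ), 0 < r → Metric.ball z r ⊆ interior {x | p x = 1} →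
        (volume (Metric.ball z r)) ^ (-(((n : ℝ) + 1) / n)) *
            ∫⁻ x in Metric.ball z r, ∫⁻ y in Metric.ball z r,
              ENNReal.ofReal |u x - u y| ∂volume ∂volume
          ≤ C := by

  classical
  set Λ0 := (⨆ δ ∈ Set.Ioo (0:ℝ) 1,
      ∫⁻ x, ∫⁻ y in {y | δ < |u x - u y|},
        ENNReal.ofReal (δ ^ p x / ‖x - y‖ ^ ((n : ℝ) + p x)) ∂volume ∂volume) with hΛdef
  set κ := ∫⁻ x, (‖u x‖₊ : ℝ≥0∞) ^ p x ∂volume with hκdef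
  haveI : Nontrivial (Eu n) := Module.nontrivial_of_finrank_pos
    (R := ℝ) (by rw [finrank_euclideanSpace_fin]; omega)
  set v1 := volume (Metric.ball (0:Eu n) 1) with hv1def
  have hv1pos : v1 ≠ 0 := (measure_ball_pos volume 0 one_pos).ne'
  have hv1ne : v1 ≠ ⊤ := measure_ball_lt_top.ne
  have hn0 : (n:ℝ) ≠ 0 := Nat.cast_ne_zero.2 (by omega)
  have hn1 : (1:ℝ) ≤ (n:ℝ) := by exact_mod_cast hn
  have hv1e_ne : v1 ^ (-(((n:ℝ)+1)/n)) ≠ ⊤ := by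
    rw [ne_eq, ENNReal.rpow_eq_top_iff]
    push_neg
    exact ⟨fun h => absurd h hv1pos, fun h => absurd h hv1ne⟩
  have hv1e1_ne : v1 ^ (-(1:ℝ)/n) ≠ ⊤ := by
    rw [ne_eq, ENNReal.rpow_eq_top_iff]
    push_neg
    exact ⟨fun h => absurd h hv1pos, fun h => absurd h hv1ne⟩
  refine ⟨(v1 ^ (((n:ℝ)-1)/n) + v1 ^ (-(((n:ℝ)+1)/n)) * (2^(n+3) * Λ0))
    + 2 * κ * v1 ^ (-(1:ℝ)/n), ?_, ?_⟩
  · rw [ENNReal.add_lt_top]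
    constructor
    · rw [ENNReal.add_lt_top]
      constructor
      · exact ENNReal.rpow_lt_top_of_nonneg
          (div_nonneg (by linarith) (by positivity)) hv1ne
      · refine ENNReal.mul_lt_top hv1e_ne.lt_top (ENNReal.mul_lt_top ?_ hLam)
        exact (ENNReal.pow_ne_top (by norm_num : (2:ℝ≥0∞) ≠ ⊤)).lt_top
    · refine ENNReal.mul_lt_top (ENNReal.mul_lt_top ?_ huLp) hv1e1_ne.lt_top
      norm_num
  · intro z r hr hB
    have hp1B : ∀ x ∈ Metric.ball z r, p x = 1 := by
      intro x hx
      have h := interior_subset (hB hx)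
      simpa using h
    set V := volume (Metric.ball z r) with hVdef
    have hVpos : V ≠ 0 := (measure_ball_pos volume z hr).ne'
    have hVne : V ≠ ⊤ := measure_ball_lt_top.ne
    have hVeq : V = ENNReal.ofReal (r^n) * v1 := by
      rw [hVdef, Measure.addHaar_ball volume z hr.le, finrank_euclideanSpace_fin]
    -- budget
    have hbW : bW n z r u ≤ 2 * Λ0 := by
      have h1 := bW_le n z r hr u humeas p hp1B
      have h2 : (∫⁻ x, ∫⁻ y in {y | 2⁻¹ < |u x - u y|},
          ENNReal.ofReal ((2⁻¹:ℝ) ^ p x / ‖x - y‖ ^ ((n : ℝ) + p x)) ∂volume ∂volume)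
          ≤ Λ0 := by
        rw [hΛdef]
        exact le_biSup
          (f := fun δ : ℝ => ∫⁻ x, ∫⁻ y in {y | δ < |u x - u y|},
            ENNReal.ofReal (δ ^ p x / ‖x - y‖ ^ ((n : ℝ) + p x)) ∂volume ∂volume)
          (⟨by norm_num, by norm_num⟩ : (2⁻¹:ℝ) ∈ Set.Ioo (0:ℝ) 1)
      have h4 : ENNReal.ofReal (2⁻¹:ℝ) = (2:ℝ≥0∞)⁻¹ := by
        rw [ENNReal.ofReal_inv_of_pos (by norm_num), ENNReal.ofReal_ofNat]
      calc bW n z r u = 2 * ((2:ℝ≥0∞)⁻¹ * bW n z r u) := by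
            rw [← mul_assoc, ENNReal.mul_inv_cancel (by norm_num) (by norm_num), one_mul]
        _ ≤ 2 * Λ0 := by
            refine mul_le_mul_right ?_ _
            rw [← h4]
            exact le_trans h1 h2
    have htail : ∫⁻ x in Metric.ball z r, ∫⁻ y in Metric.ball z r,
        ENNReal.ofReal (|u x - u y| - 1) ∂volume ∂volume
        ≤ ENNReal.ofReal ((2*r)^(n+1)) * (4 * Λ0) := by
      calc ∫⁻ x in Metric.ball z r, ∫⁻ y in Metric.ball z r,
          ENNReal.ofReal (|u x - u y| - 1) ∂volume ∂volume
          ≤ 2 * ENNReal.ofReal ((2*r)^(n+1)) * bW n z r u := tail_full n z r hr u humeas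
        _ ≤ 2 * ENNReal.ofReal ((2*r)^(n+1)) * (2 * Λ0) := mul_le_mul_right hbW _
        _ = ENNReal.ofReal ((2*r)^(n+1)) * (4 * Λ0) := by ring
    -- splitting of the full integral
    have hI : ∫⁻ x in Metric.ball z r, ∫⁻ y in Metric.ball z r,
        ENNReal.ofReal |u x - u y| ∂volume ∂volume
        ≤ V * V + ∫⁻ x in Metric.ball z r, ∫⁻ y in Metric.ball z r,
            ENNReal.ofReal (|u x - u y| - 1) ∂volume ∂volume := by
      have h1 : ∫⁻ x in Metric.ball z r, ∫⁻ y in Metric.ball z r,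
          ENNReal.ofReal |u x - u y| ∂volume ∂volume
          ≤ ∫⁻ x in Metric.ball z r, ∫⁻ y in Metric.ball z r,
            (1 + ENNReal.ofReal (|u x - u y| - 1)) ∂volume ∂volume :=
        lintegral_mono fun x => lintegral_mono fun y => ptsmall _
      refine le_trans h1 (le_of_eq ?_)
      have h2 : ∀ x : Eu n, ∫⁻ y in Metric.ball z r,
          (1 + ENNReal.ofReal (|u x - u y| - 1)) ∂volume
          = V + ∫⁻ y in Metric.ball z r, ENNReal.ofReal (|u x - u y| - 1) ∂volume := by
        intro x
        rw [lintegral_add_left measurable_const, setLIntegral_one]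
      rw [lintegral_congr h2, lintegral_add_left measurable_const, setLIntegral_const]
    rcases le_total r 1 with hr1 | hr1
    · -- small radius
      have hVle : V ≤ v1 := by
        rw [hVeq]
        refine mul_le_of_le_one_left zero_le ?_
        rw [show (1:ℝ≥0∞) = ENNReal.ofReal 1 by simp]
        exact ENNReal.ofReal_le_ofReal (pow_le_one₀ hr.le hr1)
      have hb1 : V ^ (-(((n:ℝ)+1)/n)) * (V * V) ≤ v1 ^ (((n:ℝ)-1)/n) := by
        have he : V ^ (-(((n:ℝ)+1)/n)) * (V * V) = V ^ (((n:ℝ)-1)/n) := by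
          rw [show V * V = V ^ ((2:ℕ):ℝ) by rw [ENNReal.rpow_natCast]; ring]
          rw [← ENNReal.rpow_add _ _ hVpos hVne]
          congr 1
          push_cast
          field_simp
          ring
        rw [he]
        exact ENNReal.rpow_le_rpow hVle (div_nonneg (by linarith) (by positivity))
      have hb2 : V ^ (-(((n:ℝ)+1)/n)) * ENNReal.ofReal ((2*r)^(n+1))
          = v1 ^ (-(((n:ℝ)+1)/n)) * 2^(n+1) := by
        have hrne : ENNReal.ofReal r ≠ 0 := by
          rw [ne_eq, ENNReal.ofReal_eq_zero, not_le]; exact hr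
        rw [hVeq, ENNReal.mul_rpow_of_ne_top ENNReal.ofReal_ne_top hv1ne]
        have hx1 : ENNReal.ofReal (r^n) ^ (-(((n:ℝ)+1)/n))
            = ENNReal.ofReal r ^ (-((n:ℝ)+1)) := by
          rw [ENNReal.ofReal_pow hr.le, ← ENNReal.rpow_natCast (ENNReal.ofReal r) n,
            ← ENNReal.rpow_mul]
          congr 1
          field_simp
        have hx2 : ENNReal.ofReal ((2*r)^(n+1))
            = 2^(n+1) * ENNReal.ofReal r ^ (((n:ℝ)+1)) := by
          rw [mul_pow, ENNReal.ofReal_mul (by positivity), ENNReal.ofReal_pow (by norm_num),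
            ENNReal.ofReal_pow hr.le, ENNReal.ofReal_ofNat]
          rw [show (((n:ℝ))+1) = (((n+1:ℕ)):ℝ) by push_cast; ring, ENNReal.rpow_natCast]
        rw [hx1, hx2]
        calc ENNReal.ofReal r ^ (-((n:ℝ)+1)) * v1 ^ (-(((n:ℝ)+1)/n))
            * (2^(n+1) * ENNReal.ofReal r ^ (((n:ℝ)+1)))
            = (ENNReal.ofReal r ^ (-((n:ℝ)+1)) * ENNReal.ofReal r ^ (((n:ℝ)+1)))
              * (v1 ^ (-(((n:ℝ)+1)/n)) * 2^(n+1)) := by ring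
          _ = v1 ^ (-(((n:ℝ)+1)/n)) * 2^(n+1) := by
              rw [← ENNReal.rpow_add _ _ hrne ENNReal.ofReal_ne_top]
              rw [show -((n:ℝ)+1) + ((n:ℝ)+1) = 0 by ring, ENNReal.rpow_zero, one_mul]
      calc V ^ (-(((n:ℝ)+1)/n)) * ∫⁻ x in Metric.ball z r, ∫⁻ y in Metric.ball z r,
            ENNReal.ofReal |u x - u y| ∂volume ∂volume
          ≤ V ^ (-(((n:ℝ)+1)/n)) * (V * V
            + ENNReal.ofReal ((2*r)^(n+1)) * (4 * Λ0)) :=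
            mul_le_mul_right (le_trans hI (add_le_add (le_refl _) htail)) _
        _ = V ^ (-(((n:ℝ)+1)/n)) * (V * V)
            + (V ^ (-(((n:ℝ)+1)/n)) * ENNReal.ofReal ((2*r)^(n+1))) * (4 * Λ0) := by
            rw [mul_add, mul_assoc]
        _ ≤ v1 ^ (((n:ℝ)-1)/n) + (v1 ^ (-(((n:ℝ)+1)/n)) * 2^(n+1)) * (4 * Λ0) := by
            rw [hb2]
            exact add_le_add hb1 (le_refl _)
        _ = v1 ^ (((n:ℝ)-1)/n) + v1 ^ (-(((n:ℝ)+1)/n)) * (2^(n+3) * Λ0) := by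
            rw [show (2:ℝ≥0∞)^(n+3) = 2^(n+1) * 4 by
              rw [show n+3 = (n+1)+2 by omega, pow_add]; norm_num]
            ring
        _ ≤ _ := le_self_add
    · -- large radius
      have hκB : ∫⁻ x in Metric.ball z r, ENNReal.ofReal |u x| ∂volume ≤ κ := by
        refine le_trans (setLIntegral_mono' measurableSet_ball ?_)
          (setLIntegral_le_lintegral _ _)
        intro x hx
        rw [hp1B x hx, ENNReal.rpow_one]
        exact le_of_eq (by rw [← Real.norm_eq_abs]; exact ofReal_norm (u x))
      have hI2 : ∫⁻ x in Metric.ball z r, ∫⁻ y in Metric.ball z r,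
          ENNReal.ofReal |u x - u y| ∂volume ∂volume ≤ κ * V + κ * V := by
        have h1 : ∫⁻ x in Metric.ball z r, ∫⁻ y in Metric.ball z r,
            ENNReal.ofReal |u x - u y| ∂volume ∂volume
            ≤ ∫⁻ x in Metric.ball z r, ∫⁻ y in Metric.ball z r,
              (ENNReal.ofReal |u x| + ENNReal.ofReal |u y|) ∂volume ∂volume := by
          refine lintegral_mono fun x => lintegral_mono fun y => ?_
          refine le_trans (ENNReal.ofReal_le_ofReal (abs_sub _ _)) ?_
          exact le_of_eq (ENNReal.ofReal_add (abs_nonneg _) (abs_nonneg _))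
        refine le_trans h1 ?_
        have h2 : ∀ x : Eu n, ∫⁻ y in Metric.ball z r,
            (ENNReal.ofReal |u x| + ENNReal.ofReal |u y|) ∂volume
            = ENNReal.ofReal |u x| * V
              + ∫⁻ y in Metric.ball z r, ENNReal.ofReal |u y| ∂volume := by
          intro x
          rw [lintegral_add_left measurable_const, setLIntegral_const]
        rw [lintegral_congr h2]
        have hm : Measurable fun x : Eu n => ENNReal.ofReal |u x| * V := by
          exact (ENNReal.measurable_ofReal.comp humeas.abs).mul_const V
        rw [lintegral_add_left hm, setLIntegral_const, lintegral_mul_const' V _ hVne]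
        exact add_le_add (mul_le_mul_left hκB _) (mul_le_mul_left hκB _)
      have hVge : v1 ≤ V := by
        rw [hVdef, hv1def, ← Measure.addHaar_ball_center volume z 1]
        exact measure_mono (Metric.ball_subset_ball hr1)
      have hexp : V ^ (-(((n:ℝ)+1)/n)) * (κ * V + κ * V) = 2 * κ * V ^ (-(1:ℝ)/n) := by
        have : V ^ (-(((n:ℝ)+1)/n)) * V = V ^ (-(1:ℝ)/n) := by
          calc V ^ (-(((n:ℝ)+1)/n)) * V = V ^ (-(((n:ℝ)+1)/n)) * V ^ (1:ℝ) := by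
                rw [ENNReal.rpow_one]
            _ = V ^ (-(((n:ℝ)+1)/n) + 1) := (ENNReal.rpow_add _ _ hVpos hVne).symm
            _ = V ^ (-(1:ℝ)/n) := by
                congr 1
                field_simp
                ring
        calc V ^ (-(((n:ℝ)+1)/n)) * (κ * V + κ * V)
            = 2 * κ * (V ^ (-(((n:ℝ)+1)/n)) * V) := by ring
          _ = 2 * κ * V ^ (-(1:ℝ)/n) := by rw [this]
      have hVe : V ^ (-(1:ℝ)/n) ≤ v1 ^ (-(1:ℝ)/n) := by
        rw [show (-(1:ℝ)/n) = -((1:ℝ)/n) by ring, ENNReal.rpow_neg, ENNReal.rpow_neg]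
        exact ENNReal.inv_le_inv' (ENNReal.rpow_le_rpow hVge (by positivity))
      calc V ^ (-(((n:ℝ)+1)/n)) * ∫⁻ x in Metric.ball z r, ∫⁻ y in Metric.ball z r,
            ENNReal.ofReal |u x - u y| ∂volume ∂volume
          ≤ V ^ (-(((n:ℝ)+1)/n)) * (κ * V + κ * V) := mul_le_mul_right hI2 _
        _ = 2 * κ * V ^ (-(1:ℝ)/n) := hexp
        _ ≤ 2 * κ * v1 ^ (-(1:ℝ)/n) := mul_le_mul_right hVe _
        _ ≤ _ := le_add_self
end
end
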